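/- arXiv:1802.03346 — 7 statements merged into one kernel-verified Lean document; each statement's English description precedes it below -/
import Mathlib

section
/- Consider the one-dimensional continuum Schelling equation for $M=2$ on the torus $\mathcal S$ of width $R$ with $3R/4=n\in\mathbb{N}$, written in the form $\partial_t \hat Y(x,t)=\int_{x-1}^{x+1}\operatorname{sign}\hat Y(x',t)\,dx'$. Define periodic initial data $\hat Y(x,0)=-1+3(x-4k/3)$ for $x\in\frac23[2k,2k+1)$ and $\hat Y(x,0)=1-3(x-4k/3-2/3)$ for $x\in\frac23[2k+1,2k+2)$, for $k\in\{0,\dots,n-1\}$. Then for all $t\in[0,3/2)$, $\partial_t\hat Y(x,t)=2/3-2(x-4k/3)$ for $x\in\frac23[2k,2k+1)$ and $\partial_t\hat Y(x,t)=-2/3+2(x-4k/3-2/3)$ for $x\in\frac23[2k+1,2k+2)$, and $\hat Y(\cdot,3/2)\equiv 0$. Consequently, for this initial data, solutions for $t\ge 3/2$ are not unique: both $\hat Y(x,t)=2(t-3/2)$ and $\hat Y(x,t)=-2(t-3/2)$ solve the equation for $t\ge 3/2$ (allowing the time derivative to fail at $t=3/2$). -/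
open Set MeasureTheory Function

/-!
`Ŷ(x, 0) = 3 g(x)` for the `2/3`-antiperiodic sawtooth `g` with slopes `±1`. A window of length
`2` is three antiperiods, whence `∫_{x-1}^{x+1} sign g = -2 g(x)`, and `(3 - 2t) g(x)` solves the
equation up to `t = 3/2`, where it vanishes.

Every solution agrees with it: `Ŷ(x, t) = (3 - 2t) g(x)` as long as `sign Ŷ(·, s) = sign g` almost
everywhere for `s < t`. Past such a time `t₁`, let `M` bound the outer measure of the sign defect in
every window during `[t₁, t₁ + (3 - 2t₁)/64]`. Then `|∂ₜ(Ŷ - (3 - 2t) g)| ≤ 2|g| + 2M`, while a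
sign change at `x` needs a deviation of `(3 - 2t)|g(x)|`. So the defect lies where `|g| ≤ M/16`, a
set of measure at most `M/2` per window, hence `M = 0`, and a continuation argument reaches `3/2`.
-/

theorem Function.Antiperiodic.eq_zero_of_forall_mem_Ico {α β : Type*} [AddCommGroup α]
    [LinearOrder α] [IsOrderedAddMonoid α] [Archimedean α] [SubtractionMonoid β]
    {f : α → β} {c : α} (h : Antiperiodic f c) (hc : 0 < c) (h₀ : ∀ u ∈ Ico 0 c, f u = 0)
    (x : α) : f x = 0 := by
  have h2c : 2 • c = c + c := two_nsmul c
  obtain ⟨y, ⟨hy₀, hy₁⟩, hxy⟩ := h.periodic.exists_mem_Ico₀ (h2c ▸ add_pos hc hc) x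
  rw [hxy]
  rcases lt_or_ge y c with hyc | hyc
  · exact h₀ y ⟨hy₀, hyc⟩
  · have hyc' : y - c ∈ Ico 0 c := ⟨sub_nonneg.2 hyc, sub_lt_iff_lt_add.2 (h2c ▸ hy₁)⟩
    rw [← sub_add_cancel y c, h, h₀ _ hyc', neg_zero]

theorem Function.Antiperiodic.intervalIntegral_add {E : Type*} [NormedAddCommGroup E]
    [NormedSpace ℝ E] {f : ℝ → E} {c : ℝ} (h : Antiperiodic f c) (a b : ℝ) :
    Antiperiodic (fun x => ∫ y in x + a..x + b, f y) c := by
  intro x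
  calc ∫ y in x + c + a..x + c + b, f y = ∫ y in x + a..x + b, f (y + c) := by
        rw [intervalIntegral.integral_comp_add_right]; ring_nf
    _ = -∫ y in x + a..x + b, f y := by
        rw [← intervalIntegral.integral_neg]
        exact intervalIntegral.integral_congr fun y _ => h y

lemma intervalIntegral_eq_mul_of_forall_mem_Ioo {f : ℝ → ℝ} {a b v : ℝ} (hab : a ≤ b)
    (hf : ∀ y ∈ Ioo a b, f y = v) : ∫ y in a..b, f y = v * (b - a) := by
  rw [intervalIntegral.integral_of_le hab, integral_Ioc_eq_integral_Ioo,
    setIntegral_congr_fun measurableSet_Ioo hf, setIntegral_const, measureReal_def,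
    Real.volume_Ioo, ENNReal.toReal_ofReal (by linarith), smul_eq_mul, mul_comm]

lemma measure_eq_zero_of_forall_inter_Ioo {s : Set ℝ}
    (h : ∀ a, volume (s ∩ Ioo (a - 1) (a + 1)) = 0) : volume s = 0 := by
  have hcover : s ⊆ ⋃ k : ℤ, s ∩ Ioo ((k : ℝ) - 1) (k + 1) := fun y hy => by
    have := abs_le.1 (abs_sub_round y)
    exact mem_iUnion.2 ⟨round y, hy, by linarith, by linarith⟩
  exact measure_mono_null hcover (measure_iUnion_null fun k => h _)

theorem norm_integral_sub_integral_le {α E : Type*} [MeasurableSpace α] [NormedAddCommGroup E]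
    [NormedSpace ℝ E] {μ : Measure α} [IsFiniteMeasure μ] {u v : α → E} (hu : Integrable u μ)
    (hv : Integrable v μ) {C : ℝ} (hC : ∀ x, ‖u x - v x‖ ≤ C) :
    ‖∫ x, u x ∂μ - ∫ x, v x ∂μ‖ ≤ C * μ.real {x | u x ≠ v x} := by
  set T := toMeasurable μ {x | u x ≠ v x}
  have hT : ∀ x ∉ T, u x - v x = 0 := fun x hx =>
    sub_eq_zero.2 (not_not.1 fun h => hx (subset_toMeasurable _ _ h))
  rw [← integral_sub hu hv, ← setIntegral_eq_integral_of_forall_compl_eq_zero hT]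
  calc ‖∫ x in T, u x - v x ∂μ‖ ≤ C * μ.real T :=
        norm_setIntegral_le_of_norm_le_const (measure_lt_top _ _) fun x _ => hC x
    _ = C * μ.real {x | u x ≠ v x} := by
        rw [measureReal_def, measureReal_def, measure_toMeasurable]

theorem forall_mem_Ico_of_exists_gt {α : Type*} [ConditionallyCompleteLinearOrder α] {a b : α}
    {P : α → Prop}
    (h : ∀ t ∈ Ico a b, (∀ s ∈ Ico a t, P s) → ∃ t' > t, ∀ s ∈ Ico t t', P s) :
    ∀ s ∈ Ico a b, P s := by
  by_contra! hbad
  obtain ⟨s₀, hs₀, hPs₀⟩ := hbad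
  set B := {s | s ∈ Ico a b ∧ ¬P s}
  have hB : BddBelow B := ⟨a, fun s hs => hs.1.1⟩
  have hBne : B.Nonempty := ⟨s₀, hs₀, hPs₀⟩
  have hat : a ≤ sInf B := le_csInf hBne fun s hs => hs.1.1
  have htb : sInf B < b := (csInf_le hB ⟨hs₀, hPs₀⟩).trans_lt hs₀.2
  have hbelow : ∀ s ∈ Ico a (sInf B), P s := fun s hs => by_contra fun hP =>
    (not_le.2 hs.2) (csInf_le hB ⟨⟨hs.1, hs.2.trans htb⟩, hP⟩)
  obtain ⟨t', htt', hP⟩ := h _ ⟨hat, htb⟩ hbelow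
  obtain ⟨s, hsB, hst'⟩ := exists_lt_of_csInf_lt hBne htt'
  rcases lt_or_ge s (sInf B) with hs | hs
  · exact hsB.2 (hbelow s ⟨hsB.1.1, hs⟩)
  · exact hsB.2 (hP s ⟨hs, hst'⟩)

lemma eq_add_mul_sub_of_hasDerivAt {f : ℝ → ℝ} {a b c : ℝ} (hab : a ≤ b)
    (hf : ContinuousOn f (Icc a b)) (hf' : ∀ t ∈ Ico a b, HasDerivAt f c t) :
    f b = f a + c * (b - a) := by
  have hline : ∀ t, HasDerivAt (fun t => f a + c * (t - a)) c t := fun t => by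
    simpa using ((hasDerivAt_id t).sub_const a).const_mul c |>.const_add (f a)
  exact eq_of_has_deriv_right_eq (fun t ht => (hf' t ht).hasDerivWithinAt)
    (fun t _ => (hline t).hasDerivWithinAt) hf (by fun_prop) (by simp) b ⟨hab, le_rfl⟩

lemma Real.measurable_sign : Measurable Real.sign :=
  Measurable.ite (measurableSet_lt measurable_id measurable_const) measurable_const
    (Measurable.ite (measurableSet_lt measurable_const measurable_id) measurable_const
      measurable_const)

lemma Real.abs_sign_le_one (r : ℝ) : |Real.sign r| ≤ 1 := by
  rcases Real.sign_apply_eq r with h | h | h <;> simp [h]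

lemma abs_mul_le_abs_sub_of_sign_ne {a b : ℝ} (c : ℝ) (h : Real.sign b ≠ Real.sign a) :
    c * |a| ≤ |b - c * a| := by
  rcases lt_trichotomy a 0 with ha | rfl | ha
  · have hb : 0 ≤ b := not_lt.1 fun hb => h (by rw [Real.sign_of_neg hb, Real.sign_of_neg ha])
    rw [abs_of_neg ha]
    exact (by nlinarith : c * -a ≤ b - c * a).trans (le_abs_self _)
  · simp
  · have hb : b ≤ 0 := not_lt.1 fun hb => h (by rw [Real.sign_of_pos hb, Real.sign_of_pos ha])
    rw [abs_of_pos ha]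
    exact (by nlinarith : c * a ≤ -(b - c * a)).trans (neg_le_abs _)

/-- `Ŷ(x, 0) = 3 * sawtooth x`. -/
noncomputable def sawtooth (x : ℝ) : ℝ :=
  (-1) ^ ⌊3 * x / 2⌋ * (2 / 3 * Int.fract (3 * x / 2) - 1 / 3)

lemma sawtooth_eq_of_mem_Ico (j : ℤ) {x : ℝ} (h₀ : 2 * j / 3 ≤ x)
    (h₁ : x < 2 * j / 3 + 2 / 3) : sawtooth x = (-1) ^ j * (x - 2 * j / 3 - 1 / 3) := by
  have hj : ⌊3 * x / 2⌋ = j := Int.floor_eq_iff.2 ⟨by linarith, by linarith⟩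
  rw [sawtooth, ← Int.self_sub_floor, hj]
  ring

lemma sawtooth_eq_of_mem_Ico_zero {x : ℝ} (h₀ : 0 ≤ x) (h₁ : x < 2 / 3) :
    sawtooth x = x - 1 / 3 := by
  simpa using sawtooth_eq_of_mem_Ico 0 (by simpa using h₀) (by simpa using h₁)

lemma sawtooth_eq_of_even (k : ℤ) {x : ℝ} (h₀ : 2 * (2 * k) / 3 ≤ x)
    (h₁ : x < 2 * (2 * k + 1) / 3) : sawtooth x = x - 4 * k / 3 - 1 / 3 := by
  rw [sawtooth_eq_of_mem_Ico (2 * k) (by push_cast; linarith) (by push_cast; linarith),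
    Even.neg_one_zpow ⟨k, two_mul k⟩]
  push_cast
  ring

lemma sawtooth_eq_of_odd (k : ℤ) {x : ℝ} (h₀ : 2 * (2 * k + 1) / 3 ≤ x)
    (h₁ : x < 2 * (2 * k + 2) / 3) : sawtooth x = 1 - (x - 4 * k / 3) := by
  rw [sawtooth_eq_of_mem_Ico (2 * k + 1) (by push_cast; linarith) (by push_cast; linarith),
    Odd.neg_one_zpow ⟨k, rfl⟩]
  push_cast
  ring

lemma sawtooth_antiperiodic : Antiperiodic sawtooth (2 / 3) := by
  intro x
  have h : 3 * (x + 2 / 3) / 2 = 3 * x / 2 + 1 := by ring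
  rw [sawtooth, sawtooth, h, Int.floor_add_one, Int.fract_add_one, zpow_add_one₀ (by norm_num)]
  ring

lemma sawtooth_periodic : Periodic sawtooth (4 / 3) := by
  simpa [show (2 : ℝ) * (2 / 3) = 4 / 3 by norm_num] using sawtooth_antiperiodic.periodic_two_mul

lemma abs_sawtooth (x : ℝ) : |sawtooth x| = |x - 2 / 3 * (⌊3 * x / 2⌋ + 1 / 2)| := by
  rw [sawtooth, abs_mul, abs_neg_one_zpow, one_mul, ← Int.self_sub_floor]
  ring_nf

lemma measurable_sawtooth : Measurable sawtooth :=
  (measurable_from_top.comp (Int.measurable_floor.comp (by fun_prop))).mul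
    ((measurable_fract.comp (by fun_prop)).const_mul _ |>.sub_const _)

lemma sawtooth_neg_of_mem_Ioo {y : ℝ} (hy : y ∈ Ioo (-1 / 3) (1 / 3)) : sawtooth y < 0 := by
  obtain ⟨h₀, h₁⟩ := hy
  rcases lt_or_ge y 0 with hy | hy
  · rw [sawtooth_eq_of_mem_Ico (-1) (by push_cast; linarith) (by push_cast; linarith)]
    norm_num
    linarith
  · rw [sawtooth_eq_of_mem_Ico_zero hy (by linarith)]
    linarith

lemma sawtooth_pos_of_mem_Ioo {y : ℝ} (hy : y ∈ Ioo (1 / 3) 1) : 0 < sawtooth y := by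
  obtain ⟨h₀, h₁⟩ := hy
  rcases lt_or_ge y (2 / 3) with hy | hy
  · rw [sawtooth_eq_of_mem_Ico_zero (by linarith) hy]
    linarith
  · rw [sawtooth_eq_of_mem_Ico 1 (by push_cast; linarith) (by push_cast; linarith)]
    norm_num
    linarith

lemma integrableOn_sign_sawtooth {s : Set ℝ} (hs : volume s ≠ ⊤) :
    IntegrableOn (fun y => Real.sign (sawtooth y)) s :=
  Measure.integrableOn_of_bounded hs
    (Real.measurable_sign.comp measurable_sawtooth).aestronglyMeasurable
    (M := 1) (ae_of_all _ fun _ => Real.abs_sign_le_one _)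

lemma intervalIntegrable_sign_sawtooth (a b : ℝ) :
    IntervalIntegrable (fun y => Real.sign (sawtooth y)) volume a b :=
  ⟨integrableOn_sign_sawtooth measure_Ioc_lt_top.ne,
    integrableOn_sign_sawtooth measure_Ioc_lt_top.ne⟩

lemma intervalIntegral_sign_sawtooth_of_mem_Ico {u : ℝ} (h₀ : 0 ≤ u) (h₁ : u < 2 / 3) :
    ∫ y in u + -(1 / 3)..u + 1 / 3, Real.sign (sawtooth y) = 2 * sawtooth u := by
  have hneg : ∫ y in u + -(1 / 3)..1 / 3, Real.sign (sawtooth y) = -1 * (2 / 3 - u) :=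
    (intervalIntegral_eq_mul_of_forall_mem_Ioo (by linarith) fun y hy =>
      Real.sign_of_neg (sawtooth_neg_of_mem_Ioo ⟨by linarith [hy.1], hy.2⟩)).trans (by ring)
  have hpos : ∫ y in (1 / 3)..u + 1 / 3, Real.sign (sawtooth y) = 1 * u :=
    (intervalIntegral_eq_mul_of_forall_mem_Ioo (by linarith) fun y hy =>
      Real.sign_of_pos (sawtooth_pos_of_mem_Ioo ⟨hy.1, by linarith [hy.2]⟩)).trans (by ring)
  rw [← intervalIntegral.integral_add_adjacent_intervals (intervalIntegrable_sign_sawtooth _ _)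
    (intervalIntegrable_sign_sawtooth _ _), hneg, hpos, sawtooth_eq_of_mem_Ico_zero h₀ h₁]
  ring

lemma intervalIntegral_sign_sawtooth (x : ℝ) :
    ∫ y in x + -(1 / 3)..x + 1 / 3, Real.sign (sawtooth y) = 2 * sawtooth x := by
  have hanti : Antiperiodic (fun y => Real.sign (sawtooth y)) (2 / 3) := fun y => by
    simp only [sawtooth_antiperiodic y, Real.sign_neg]
  have hdiff : Antiperiodic
      (fun x => (∫ y in x + -(1 / 3)..x + 1 / 3, Real.sign (sawtooth y)) - 2 * sawtooth x)
      (2 / 3) := fun x => by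
    simp only [hanti.intervalIntegral_add _ _ x, sawtooth_antiperiodic x]
    ring
  exact sub_eq_zero.1 (hdiff.eq_zero_of_forall_mem_Ico (by norm_num)
    (fun u hu => sub_eq_zero.2 (intervalIntegral_sign_sawtooth_of_mem_Ico hu.1 hu.2)) x)

/-- The window `(x - 1, x + 1)` is three antiperiods of `sawtooth`, two of which cancel. -/
lemma setIntegral_sign_sawtooth (x : ℝ) :
    ∫ y in Ioo (x - 1) (x + 1), Real.sign (sawtooth y) = -2 * sawtooth x := by
  have hleft : ∫ y in x - 1..x - 1 / 3, Real.sign (sawtooth y) = -(2 * sawtooth x) := by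
    rw [← mul_neg, ← sawtooth_antiperiodic.sub_eq, ← intervalIntegral_sign_sawtooth]
    congr 1 <;> ring
  have hright : ∫ y in x + 1 / 3..x + 1, Real.sign (sawtooth y) = -(2 * sawtooth x) := by
    rw [← mul_neg, ← sawtooth_antiperiodic, ← intervalIntegral_sign_sawtooth]
    congr 1 <;> ring
  have hmid := intervalIntegral_sign_sawtooth x
  rw [← sub_eq_add_neg] at hmid
  rw [← integral_Ioc_eq_integral_Ioo, ← intervalIntegral.integral_of_le (by linarith),
    ← intervalIntegral.integral_add_adjacent_intervals (b := x + 1 / 3)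
      (intervalIntegrable_sign_sawtooth _ _) (intervalIntegrable_sign_sawtooth _ _),
    ← intervalIntegral.integral_add_adjacent_intervals (b := x - 1 / 3)
      (intervalIntegrable_sign_sawtooth _ _) (intervalIntegrable_sign_sawtooth _ _),
    hleft, hmid, hright]
  ring

/-- `|sawtooth y| ≤ ρ` puts `y` within `ρ` of a zero `2/3 * (j + 1/2)`, `j = ⌊3y/2⌋`, and a window
of length `2` meets only four values of `j`. -/
lemma volume_abs_sawtooth_le_inter_Ioo_le (ρ a : ℝ) :
    volume ({y | |sawtooth y| ≤ ρ} ∩ Ioo (a - 1) (a + 1)) ≤ ENNReal.ofReal (8 * ρ) := by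
  set N := ⌊3 * (a - 1) / 2⌋
  have hcover : {y | |sawtooth y| ≤ ρ} ∩ Ioo (a - 1) (a + 1) ⊆
      ⋃ j ∈ Finset.Icc N (N + 3), Icc (2 / 3 * (j + 1 / 2) - ρ) (2 / 3 * (j + 1 / 2) + ρ) := by
    rintro y ⟨hy : |sawtooth y| ≤ ρ, hya, hyb⟩
    rw [abs_sawtooth, abs_le] at hy
    refine mem_biUnion (x := ⌊3 * y / 2⌋)
      (Finset.mem_Icc.2 ⟨Int.floor_mono (by linarith), ?_⟩) ⟨by linarith, by linarith⟩
    have : 3 * y / 2 < ((N + 3 + 1 : ℤ) : ℝ) := by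
      push_cast; linarith [Int.lt_floor_add_one (3 * (a - 1) / 2)]
    exact Int.lt_add_one_iff.1 (Int.floor_lt.2 this)
  calc volume ({y | |sawtooth y| ≤ ρ} ∩ Ioo (a - 1) (a + 1))
      ≤ ∑ j ∈ Finset.Icc N (N + 3),
          volume (Icc (2 / 3 * ((j : ℝ) + 1 / 2) - ρ) (2 / 3 * (j + 1 / 2) + ρ)) :=
        (measure_mono hcover).trans (measure_biUnion_finset_le _ _)
    _ = ENNReal.ofReal (8 * ρ) := by
        simp only [Real.volume_Icc, add_sub_sub_cancel, Finset.sum_const, Int.card_Icc,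
          nsmul_eq_mul]
        rw [show (N + 3 + 1 - N).toNat = 4 by omega, show 8 * ρ = 4 * (ρ + ρ) by ring,
          ENNReal.ofReal_mul (by norm_num)]
        norm_num

lemma eq_three_mul_sawtooth {R : ℝ} {n : ℕ} (hn : 3 * R / 4 = n) (hn1 : 1 ≤ n) {f : ℝ → ℝ}
    (hper : Periodic f R)
    (h₁ : ∀ k : ℕ, k < n → ∀ x : ℝ, 2 * (2 * (k : ℝ)) / 3 ≤ x →
      x < 2 * (2 * (k : ℝ) + 1) / 3 → f x = -1 + 3 * (x - 4 * (k : ℝ) / 3))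
    (h₂ : ∀ k : ℕ, k < n → ∀ x : ℝ, 2 * (2 * (k : ℝ) + 1) / 3 ≤ x →
      x < 2 * (2 * (k : ℝ) + 2) / 3 → f x = 1 - 3 * (x - 4 * (k : ℝ) / 3 - 2 / 3))
    (x : ℝ) : f x = 3 * sawtooth x := by
  have hR : R = n * (4 / 3) := by linarith
  have hdiff : Periodic (fun x => f x - 3 * sawtooth x) R := fun x => by
    simp only [hper x, hR ▸ sawtooth_periodic.nat_mul n x]
  obtain ⟨y, ⟨hy₀, hyR⟩, hxy⟩ := hdiff.exists_mem_Ico₀ (by rw [hR]; positivity) x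
  refine sub_eq_zero.1 (hxy.trans (sub_eq_zero.2 ?_))
  have hk : ⌊3 * y / 4⌋₊ < n := (Nat.floor_lt (by positivity)).2 (by linarith)
  have hfloor := Nat.floor_le (by positivity : 0 ≤ 3 * y / 4)
  have hfloor' := Nat.lt_floor_add_one (3 * y / 4)
  rcases lt_or_ge y (2 * (2 * (⌊3 * y / 4⌋₊ : ℝ) + 1) / 3) with hy | hy
  · rw [h₁ _ hk y (by linarith) hy,
      sawtooth_eq_of_even ⌊3 * y / 4⌋₊ (by push_cast; linarith) (by push_cast; linarith)]
    push_cast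
    ring
  · rw [h₂ _ hk y hy (by linarith),
      sawtooth_eq_of_odd ⌊3 * y / 4⌋₊ (by push_cast; linarith) (by push_cast; linarith)]
    push_cast
    ring

/-- `Y` is not assumed measurable in space, so `signDefect` need not be measurable: only its
outer measure is used. -/
def signDefect (f : ℝ → ℝ) : Set ℝ := {y | Real.sign (f y) ≠ Real.sign (sawtooth y)}

lemma setIntegral_sign_eq_of_volume_signDefect {f : ℝ → ℝ} (h : volume (signDefect f) = 0)
    (x : ℝ) :
    ∫ y in Ioo (x - 1) (x + 1), Real.sign (f y) = -2 * sawtooth x := by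
  rw [← setIntegral_sign_sawtooth x]
  exact integral_congr_ae (ae_restrict_of_ae (ae_iff.2 h))

lemma abs_setIntegral_sign_add_le (f : ℝ → ℝ) (x : ℝ) :
    |(∫ y in Ioo (x - 1) (x + 1), Real.sign (f y)) + 2 * sawtooth x| ≤
      2 * |sawtooth x| + 2 * volume.real (signDefect f ∩ Ioo (x - 1) (x + 1)) := by
  have hdef : 0 ≤ volume.real (signDefect f ∩ Ioo (x - 1) (x + 1)) := measureReal_nonneg
  by_cases hf : IntegrableOn (fun y => Real.sign (f y)) (Ioo (x - 1) (x + 1))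
  · have : IsFiniteMeasure (volume.restrict (Ioo (x - 1) (x + 1))) :=
      isFiniteMeasure_restrict.2 measure_Ioo_lt_top.ne
    have key := norm_integral_sub_integral_le (C := 2) hf
      (integrableOn_sign_sawtooth measure_Ioo_lt_top.ne) fun y => by
        rw [Real.norm_eq_abs]
        linarith [abs_sub (Real.sign (f y)) (Real.sign (sawtooth y)),
          Real.abs_sign_le_one (f y), Real.abs_sign_le_one (sawtooth y)]
    rw [setIntegral_sign_sawtooth, Real.norm_eq_abs, measureReal_def,
      Measure.restrict_apply' measurableSet_Ioo, ← measureReal_def] at key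
    change _ ≤ 2 * volume.real (signDefect f ∩ _) at key
    rw [← sub_neg_eq_add, ← neg_mul]
    linarith [abs_nonneg (sawtooth x)]
  · -- the integral is the junk value `0`, and `2 * |sawtooth x|` covers that case
    rw [integral_undef hf, zero_add, abs_mul, abs_two]
    linarith

def SolvesSchelling (Y : ℝ → ℝ → ℝ) (I : Set ℝ) : Prop :=
  ∀ x, ∀ t ∈ I,
    HasDerivAt (fun s => Y x s) (∫ x' in Ioo (x - 1) (x + 1), Real.sign (Y x' t)) t

lemma solvesSchelling_affine {σ t₀ : ℝ} (hσ : σ = 1 ∨ σ = -1) :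
    SolvesSchelling (fun _ s => σ * (2 * (s - t₀))) (Ioi t₀) := by
  intro x t ht
  have hsign : Real.sign (σ * (2 * (t - t₀))) = σ := by
    have : 0 < 2 * (t - t₀) := by linarith [mem_Ioi.1 ht]
    rcases hσ with rfl | rfl
    · exact Real.sign_of_pos (by linarith)
    · exact Real.sign_of_neg (by linarith)
  simp only [hsign, setIntegral_const,
    Real.volume_real_Ioo_of_le (by linarith : x - 1 ≤ x + 1), smul_eq_mul]
  exact ((((hasDerivAt_id' t).sub_const t₀).const_mul 2).const_mul σ).congr_deriv (by ring)

section Bootstrap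

variable {Y : ℝ → ℝ → ℝ} {t₁ : ℝ}

lemma abs_sub_mul_sawtooth_le (hY : SolvesSchelling Y (Ico 0 (3 / 2))) {T M : ℝ}
    (ht₁ : 0 ≤ t₁) (hT : T < 3 / 2) (hstart : ∀ x, Y x t₁ = (3 - 2 * t₁) * sawtooth x)
    (hM : ∀ w ∈ Icc t₁ T, ∀ a,
      volume.real (signDefect (fun y => Y y w) ∩ Ioo (a - 1) (a + 1)) ≤ M)
    (x : ℝ) : ∀ s ∈ Icc t₁ T,
      |Y x s - (3 - 2 * s) * sawtooth x| ≤ (2 * |sawtooth x| + 2 * M) * (s - t₁) := by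
  have hderiv : ∀ w ∈ Icc t₁ T, HasDerivWithinAt (fun w => Y x w - (3 - 2 * w) * sawtooth x)
      ((∫ y in Ioo (x - 1) (x + 1), Real.sign (Y y w)) + 2 * sawtooth x) (Icc t₁ T) w := by
    intro w hw
    have hlin : HasDerivAt (fun w => (3 - 2 * w) * sawtooth x) (-2 * sawtooth x) w := by
      simpa using (((hasDerivAt_id w).const_mul 2).const_sub 3).mul_const (sawtooth x)
    exact ((hY x w ⟨ht₁.trans hw.1, hw.2.trans_lt hT⟩).sub hlin).hasDerivWithinAt.congr_deriv
      (by ring)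
  intro s hs
  have := norm_image_sub_le_of_norm_deriv_le_segment' (C := 2 * |sawtooth x| + 2 * M) hderiv
    (fun w hw => (abs_setIntegral_sign_add_le _ x).trans
      (by linarith [hM w (Ico_subset_Icc_self hw) x])) s hs
  rwa [hstart, sub_self, sub_zero, Real.norm_eq_abs] at this

lemma measureReal_signDefect_inter_le_half (hY : SolvesSchelling Y (Ico 0 (3 / 2))) {M : ℝ}
    (ht₁ : t₁ ∈ Ico 0 (3 / 2))
    (hstart : ∀ x, Y x t₁ = (3 - 2 * t₁) * sawtooth x) (hM₀ : 0 ≤ M)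
    (hM : ∀ w ∈ Icc t₁ (t₁ + (3 - 2 * t₁) / 64), ∀ a,
      volume.real (signDefect (fun y => Y y w) ∩ Ioo (a - 1) (a + 1)) ≤ M)
    {w : ℝ} (hw : w ∈ Icc t₁ (t₁ + (3 - 2 * t₁) / 64)) (a : ℝ) :
    volume.real (signDefect (fun y => Y y w) ∩ Ioo (a - 1) (a + 1)) ≤ M / 2 := by
  obtain ⟨ht₀, ht₁lt⟩ := ht₁
  have hsub : signDefect (fun y => Y y w) ∩ Ioo (a - 1) (a + 1) ⊆
      {y | |sawtooth y| ≤ M / 16} ∩ Ioo (a - 1) (a + 1) := by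
    rintro y ⟨hy, hya⟩
    refine ⟨?_, hya⟩
    have hlow := abs_mul_le_abs_sub_of_sign_ne (3 - 2 * w) hy
    have hup := abs_sub_mul_sawtooth_le hY ht₀ (by linarith) hstart hM y w hw
    have hg := abs_nonneg (sawtooth y)
    show |sawtooth y| ≤ M / 16
    -- `(3 - 2w)|g| ≤ (2|g| + 2M)(w - t₁)` with `w - t₁ ≤ (3 - 2t₁)/64` forces `|g| ≤ M/16`
    nlinarith [mul_le_mul_of_nonneg_left hw.2 hg, mul_le_mul_of_nonneg_left hw.2 hM₀,
      mul_le_mul_of_nonneg_left hw.1 hg]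
  calc volume.real (signDefect (fun y => Y y w) ∩ Ioo (a - 1) (a + 1))
      ≤ volume.real ({y | |sawtooth y| ≤ M / 16} ∩ Ioo (a - 1) (a + 1)) :=
        measureReal_mono hsub
          (measure_lt_top_of_subset inter_subset_right measure_Ioo_lt_top.ne).ne
    _ ≤ 8 * (M / 16) := ENNReal.toReal_le_of_le_ofReal (by positivity)
        (volume_abs_sawtooth_le_inter_Ioo_le _ _)
    _ = M / 2 := by ring

lemma volume_signDefect_eq_zero_of_eq (hY : SolvesSchelling Y (Ico 0 (3 / 2)))
    (ht₁ : t₁ ∈ Ico 0 (3 / 2))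
    (hstart : ∀ x, Y x t₁ = (3 - 2 * t₁) * sawtooth x) :
    ∀ w ∈ Icc t₁ (t₁ + (3 - 2 * t₁) / 64), volume (signDefect fun y => Y y w) = 0 := by
  set T := t₁ + (3 - 2 * t₁) / 64
  set m : ℝ → ℝ → ℝ :=
    fun w a => volume.real (signDefect (fun y => Y y w) ∩ Ioo (a - 1) (a + 1))
  set S := {v | ∃ w ∈ Icc t₁ T, ∃ a, v = m w a}
  have hfin : ∀ w a, volume (signDefect (fun y => Y y w) ∩ Ioo (a - 1) (a + 1)) ≠ ⊤ :=
    fun w a => (measure_lt_top_of_subset inter_subset_right measure_Ioo_lt_top.ne).ne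
  have hS : BddAbove S := ⟨2, by
    rintro _ ⟨w, -, a, rfl⟩
    calc m w a ≤ volume.real (Ioo (a - 1) (a + 1)) :=
          measureReal_mono inter_subset_right measure_Ioo_lt_top.ne
      _ = 2 := by rw [Real.volume_real_Ioo_of_le (by linarith)]; ring⟩
  have hle : ∀ w ∈ Icc t₁ T, ∀ a, m w a ≤ sSup S := fun w hw a => le_csSup hS ⟨w, hw, a, rfl⟩
  have hT : t₁ ∈ Icc t₁ T := ⟨le_rfl, le_add_of_nonneg_right (by linarith [ht₁.2])⟩
  have hM₀ : 0 ≤ sSup S := measureReal_nonneg.trans (hle t₁ hT 0)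
  have hhalf : sSup S ≤ sSup S / 2 := csSup_le ⟨_, t₁, hT, 0, rfl⟩ <| by
    rintro _ ⟨w, hw, a, rfl⟩
    exact measureReal_signDefect_inter_le_half hY ht₁ hstart hM₀ hle hw a
  intro w hw
  refine measure_eq_zero_of_forall_inter_Ioo fun a => (measureReal_eq_zero_iff (hfin w a)).1 ?_
  exact le_antisymm ((hle w hw a).trans (by linarith)) measureReal_nonneg

lemma volume_signDefect_eq_zero (hY : SolvesSchelling Y (Ico 0 (3 / 2)))
    (h₀ : ∀ x, Y x 0 = 3 * sawtooth x) :
    ∀ t ∈ Ico (0 : ℝ) (3 / 2), volume (signDefect fun y => Y y t) = 0 := by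
  refine forall_mem_Ico_of_exists_gt fun t ht hnull =>
    ⟨t + (3 - 2 * t) / 64, by linarith [ht.2], fun w hw =>
      volume_signDefect_eq_zero_of_eq hY ht (fun x => ?_) w (Ico_subset_Icc_self hw)⟩
  have hcont : ContinuousOn (fun s => Y x s) (Icc 0 t) := fun s hs =>
    (hY x s ⟨hs.1, hs.2.trans_lt ht.2⟩).continuousAt.continuousWithinAt
  rw [eq_add_mul_sub_of_hasDerivAt ht.1 hcont fun s hs =>
    setIntegral_sign_eq_of_volume_signDefect (hnull s hs) x ▸ hY x s ⟨hs.1, hs.2.trans ht.2⟩, h₀]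
  ring

end Bootstrap

/-- Non-uniqueness example for the one-dimensional `M = 2` continuum Schelling equation
`∂ₜ Ŷ(x,t) = ∫_{x-1}^{x+1} sign Ŷ(x',t) dx'` on the torus of width `R` with `3R/4 = n ∈ ℕ`:
with the given periodic sawtooth initial data, for `t ∈ [0, 3/2)` the time derivative is as
given piecewise, `Ŷ(·,3/2) ≡ 0`, and both `±2(t - 3/2)` solve the equation for `t > 3/2`. -/
theorem stmt3 (R : ℝ) (n : ℕ) (hn : 3 * R / 4 = (n : ℝ)) (hn1 : 1 ≤ n)
    (Y : ℝ → ℝ → ℝ)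
    (hper : ∀ x t : ℝ, Y (x + R) t = Y x t)
    (hcont : ∀ x : ℝ, Continuous (Y x))
    (hinit1 : ∀ k : ℕ, k < n → ∀ x : ℝ,
      2 * (2 * (k : ℝ)) / 3 ≤ x → x < 2 * (2 * (k : ℝ) + 1) / 3 →
      Y x 0 = -1 + 3 * (x - 4 * (k : ℝ) / 3))
    (hinit2 : ∀ k : ℕ, k < n → ∀ x : ℝ,
      2 * (2 * (k : ℝ) + 1) / 3 ≤ x → x < 2 * (2 * (k : ℝ) + 2) / 3 →
      Y x 0 = 1 - 3 * (x - 4 * (k : ℝ) / 3 - 2 / 3))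
    (hPDE : ∀ x : ℝ, ∀ t ∈ Set.Ico (0 : ℝ) (3 / 2),
      HasDerivAt (fun s => Y x s)
        (∫ x' in Set.Ioo (x - 1) (x + 1), Real.sign (Y x' t)) t) :
    (∀ k : ℕ, k < n → ∀ x : ℝ,
      2 * (2 * (k : ℝ)) / 3 ≤ x → x < 2 * (2 * (k : ℝ) + 1) / 3 →
      ∀ t ∈ Set.Ico (0 : ℝ) (3 / 2),
        HasDerivAt (fun s => Y x s) (2 / 3 - 2 * (x - 4 * (k : ℝ) / 3)) t) ∧
    (∀ k : ℕ, k < n → ∀ x : ℝ,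
      2 * (2 * (k : ℝ) + 1) / 3 ≤ x → x < 2 * (2 * (k : ℝ) + 2) / 3 →
      ∀ t ∈ Set.Ico (0 : ℝ) (3 / 2),
        HasDerivAt (fun s => Y x s) (-2 / 3 + 2 * (x - 4 * (k : ℝ) / 3 - 2 / 3)) t) ∧
    (∀ x : ℝ, Y x (3 / 2) = 0) ∧
    (∀ σ : ℝ, σ = 1 ∨ σ = -1 →
      ∀ x : ℝ, ∀ t : ℝ, 3 / 2 < t →
        HasDerivAt (fun s : ℝ => σ * (2 * (s - 3 / 2)))
          (∫ x' in Set.Ioo (x - 1) (x + 1),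
            Real.sign (σ * (2 * (t - 3 / 2)))) t) := by
  have h₀ : ∀ x, Y x 0 = 3 * sawtooth x :=
    eq_three_mul_sawtooth (f := fun x => Y x 0) hn hn1 (fun x => hper x 0) hinit1 hinit2
  have hnull := volume_signDefect_eq_zero hPDE h₀
  have hderiv : ∀ x, ∀ t ∈ Ico (0 : ℝ) (3 / 2), HasDerivAt (fun s => Y x s) (-2 * sawtooth x) t :=
    fun x t ht => setIntegral_sign_eq_of_volume_signDefect (hnull t ht) x ▸ hPDE x t ht
  refine ⟨fun k _ x hx₀ hx₁ t ht => ?_, fun k _ x hx₀ hx₁ t ht => ?_, fun x => ?_,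
    fun σ hσ => solvesSchelling_affine hσ⟩
  · convert hderiv x t ht using 1
    rw [sawtooth_eq_of_even k (by push_cast; linarith) (by push_cast; linarith)]
    push_cast
    ring
  · convert hderiv x t ht using 1
    rw [sawtooth_eq_of_odd k (by push_cast; linarith) (by push_cast; linarith)]
    push_cast
    ring
  · rw [eq_add_mul_sub_of_hasDerivAt (by norm_num) (hcont x).continuousOn (hderiv x), h₀]
    ring
end

section
/- Let $G$ be a locally finite graph and $M\ge 2$. Suppose each edge $(i,j)$ of the extended Schelling graph (where $i\sim j$ iff $j\in\mathfrak N(i)$) carries a weight $w_{ij}>0$ with $\sum_{(i,j)}w_{ij}<\infty$, and that for all $i$ and all $j,k\in\mathfrak N(i)$, $w_{ij}/w_{ik}<\frac{D+1}{D-1}$ where $D$ is a uniform bound on neighborhood sizes. For the single-site-update Schelling dynamics with opinions $X(i,t)$, define the Lyapunov function $L_t=\sum_{(i,j)}w_{ij}\mathbf 1_{X(i,t)\ne X(j,t)}$. Then: (a) $L_t$ is nonincreasing in $t$; (b) whenever a node $i$ updates at time $t$, the jump $J^i_t=L_t-L_{t^-}$ is either $0$ (if $i$ keeps its opinion) or at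 most $-\epsilon_i$ for some $\epsilon_i>0$ depending only on $i$ and the weights; (c) consequently every node's opinion converges: for each $i$ there is a random time $T$ with $X(i,t)=X(i,T)$ for all $t\ge T$. -/
open Finset

/-- Convergence of the single-site-update Schelling dynamics on a locally finite graph with
bounded neighborhood sizes, via the weighted-disagreement Lyapunov function
`L_n = ∑ w_{ij} 𝟙{X_n(i) ≠ X_n(j)}`: (a) `L` is nonincreasing; (b) every update of node `i`
either keeps its opinion (jump `0`) or decreases `L` by at least some `ε_i > 0`;
(c) every node's opinion eventually stabilizes. -/
theorem stmt10 (V : Type*) [DecidableEq V] (M : ℕ) (hM : 2 ≤ M)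
    (𝔑 : V → Finset V) (hself : ∀ i, i ∈ 𝔑 i)
    (hsym : ∀ i j, j ∈ 𝔑 i ↔ i ∈ 𝔑 j)
    (D : ℕ) (hD : 2 ≤ D) (hcard : ∀ i, (𝔑 i).card ≤ D)
    (w : V → V → ℝ) (hwpos : ∀ i j, j ∈ 𝔑 i → 0 < w i j)
    (hwsym : ∀ i j, w i j = w j i)
    (hsum : Summable fun p : V × V => if p.2 ∈ 𝔑 p.1 then w p.1 p.2 else 0)
    (hratio : ∀ i, ∀ j ∈ 𝔑 i, ∀ k ∈ 𝔑 i,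
      w i j / w i k < ((D : ℝ) + 1) / ((D : ℝ) - 1))
    (X : ℕ → V → Fin M) (upd : ℕ → V)
    (hfreeze : ∀ n : ℕ, ∀ j : V, j ≠ upd n → X (n + 1) j = X n j)
    (hbest : ∀ n : ℕ, ∀ m : Fin M,
      ((𝔑 (upd n)).filter fun j => X n j = m).card ≤
        ((𝔑 (upd n)).filter fun j => X n j = X (n + 1) (upd n)).card)
    (hstrict : ∀ n : ℕ, X (n + 1) (upd n) ≠ X n (upd n) →
      ((𝔑 (upd n)).filter fun j => X n j = X n (upd n)).card <
        ((𝔑 (upd n)).filter fun j => X n j = X (n + 1) (upd n)).card)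
    (L : ℕ → ℝ)
    (hL : ∀ n : ℕ, L n = ∑' p : V × V,
      if p.2 ∈ 𝔑 p.1 ∧ X n p.1 ≠ X n p.2 then w p.1 p.2 else 0) :
    (∀ n : ℕ, L (n + 1) ≤ L n) ∧
    (∀ i : V, ∃ ε > 0, ∀ n : ℕ, upd n = i →
      X (n + 1) i = X n i ∨ L (n + 1) ≤ L n - ε) ∧
    (∀ i : V, ∃ n₀ : ℕ, ∀ n : ℕ, n₀ ≤ n → X n i = X n₀ i) := by
  classical
  have hne : ∀ i, (𝔑 i).Nonempty := fun i => ⟨i, hself i⟩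
  set F : ℕ → V × V → ℝ := fun n p =>
    if p.2 ∈ 𝔑 p.1 ∧ X n p.1 ≠ X n p.2 then w p.1 p.2 else 0 with hF
  have hLF : ∀ n, L n = ∑' p : V × V, F n p := hL
  have hFnonneg : ∀ n p, 0 ≤ F n p := by
    intro n p
    simp only [hF]
    split
    · exact le_of_lt (hwpos _ _ (by tauto))
    · exact le_rfl
  have hFle : ∀ n p, F n p ≤ (if p.2 ∈ 𝔑 p.1 then w p.1 p.2 else 0) := by
    intro n p
    simp only [hF]
    split
    · rename_i h; rw [if_pos h.1]
    · split
      · exact le_of_lt (hwpos _ _ (by assumption))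
      · exact le_rfl
  have hFsum : ∀ n, Summable (F n) :=
    fun n => Summable.of_nonneg_of_le (hFnonneg n) (hFle n) hsum
  have hLnonneg : ∀ n, 0 ≤ L n := by
    intro n; rw [hLF n]; exact tsum_nonneg (hFnonneg n)
  -- weights extrema and ε
  set wmax : V → ℝ := fun i => (𝔑 i).sup' (hne i) (w i) with hwmax
  set wmin : V → ℝ := fun i => (𝔑 i).inf' (hne i) (w i) with hwmin
  set ε : V → ℝ := fun i => 2 * ((D : ℝ) * wmin i - ((D : ℝ) - 2) * wmax i) with hε
  have hwmaxle : ∀ i, ∀ j ∈ 𝔑 i, w i j ≤ wmax i := fun i j hj => Finset.le_sup' (w i) hj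
  have hwminle : ∀ i, ∀ j ∈ 𝔑 i, wmin i ≤ w i j := fun i j hj => Finset.inf'_le (w i) hj
  have hwminpos : ∀ i, 0 < wmin i := by
    intro i
    obtain ⟨k, hk, hkeq⟩ := Finset.exists_mem_eq_inf' (hne i) (w i)
    rw [hwmin]; simp only []; rw [hkeq]; exact hwpos i k hk
  have hminmax : ∀ i, wmin i ≤ wmax i :=
    fun i => le_trans (hwminle i i (hself i)) (hwmaxle i i (hself i))
  have hkeyratio : ∀ i, ((D : ℝ) - 1) * wmax i < ((D : ℝ) + 1) * wmin i := by
    intro i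
    obtain ⟨j, hj, hjeq⟩ := Finset.exists_mem_eq_sup' (hne i) (w i)
    obtain ⟨k, hk, hkeq⟩ := Finset.exists_mem_eq_inf' (hne i) (w i)
    have hr := hratio i j hj k hk
    have hkpos : 0 < w i k := hwpos i k hk
    have hD1 : (0:ℝ) < (D : ℝ) - 1 := by
      have : (2:ℝ) ≤ (D:ℝ) := by exact_mod_cast hD
      linarith
    rw [div_lt_div_iff₀ hkpos hD1] at hr
    have e1 : wmax i = w i j := hjeq
    have e2 : wmin i = w i k := hkeq
    rw [e1, e2]; nlinarith
  have hεpos : ∀ i, 0 < ε i := by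
    intro i
    have h1 := hkeyratio i
    have h2 := hminmax i
    rw [hε]; simp only []
    nlinarith
  -- if the updated node keeps its opinion, L is unchanged
  have hsame : ∀ n, X (n + 1) (upd n) = X n (upd n) → L (n + 1) = L n := by
    intro n hs
    have hall : ∀ j, X (n + 1) j = X n j := by
      intro j
      by_cases hj : j = upd n
      · rw [hj]; exact hs
      · exact hfreeze n j hj
    rw [hLF (n + 1), hLF n]
    exact tsum_congr fun p => by simp only [hF, hall p.1, hall p.2]
  -- key jump estimate
  have key : ∀ n, X (n + 1) (upd n) ≠ X n (upd n) → L (n + 1) ≤ L n - ε (upd n) := by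
    intro n hchange
    set i := upd n with hi
    set a := X n i with ha
    set b := X (n + 1) i with hb
    have hba : b ≠ a := hchange
    have hXj : ∀ j, j ≠ i → X (n + 1) j = X n j := fun j hj => hfreeze n j hj
    set h : V × V → ℝ := fun p => F (n + 1) p - F n p with hh
    set E : Finset V := (𝔑 i).erase i with hE
    set S : Finset (V × V) := ({i} ×ˢ 𝔑 i) ∪ (E ×ˢ {i}) with hS
    have hsupp : ∀ p : V × V, p ∉ S → h p = 0 := by
      rintro ⟨p1, p2⟩ hp
      simp only [hS, hE, Finset.mem_union, Finset.mem_product, Finset.mem_singleton,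
        Finset.mem_erase, not_or, not_and_or] at hp
      by_cases hmem : p2 ∈ 𝔑 p1
      · -- then p1 ≠ i and p2 ≠ i (else p ∈ S)
        have hp1 : p1 ≠ i := by
          intro h1
          rcases hp with ⟨hA, _⟩
          rcases hA with hA | hA
          · exact hA h1
          · subst h1; exact hA hmem
        have hp2 : p2 ≠ i := by
          intro h2
          rcases hp with ⟨_, hB⟩
          rcases hB with hB | hB
          · rcases hB with hB | hB
            · exact hB hp1
            · subst h2; exact hB ((hsym p1 i).mp hmem)
          · exact hB h2
        simp only [hh, hF, hXj p1 hp1, hXj p2 hp2, sub_self]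
      · simp only [hh, hF, hmem, false_and, if_false, sub_self]
    have hhsum : Summable h := summable_of_ne_finset_zero hsupp
    have htsum : ∑' p, h p = ∑ p ∈ S, h p := tsum_eq_sum hsupp
    have hLsplit : L (n + 1) = L n + ∑ p ∈ S, h p := by
      have heq : ∑' p, F (n + 1) p = ∑' p, (F n p + h p) :=
        tsum_congr fun p => by simp only [hh]; ring
      rw [hLF (n + 1), hLF n, heq, Summable.tsum_add (hFsum n) hhsum, htsum]
    -- symmetry of h
    have hsymm : ∀ j ∈ 𝔑 i, h (j, i) = h (i, j) := by
      intro j hj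
      have hji : i ∈ 𝔑 j := (hsym i j).mp hj
      have e : ∀ m : ℕ, F m (j, i) = F m (i, j) := by
        intro m
        simp only [hF]
        rw [hwsym j i]
        refine if_congr ?_ rfl rfl
        simp only [hji, hj, true_and]
        exact ne_comm
      simp only [hh, e]
    have hii : h (i, i) = 0 := by
      simp only [hh, hF, ne_eq, not_true_eq_false, and_false, if_false,
        Decidable.not_not]
      simp
    -- sum over S
    have hdisj : Disjoint (({i} : Finset V) ×ˢ 𝔑 i) (E ×ˢ ({i} : Finset V)) := by
      rw [Finset.disjoint_left]
      rintro ⟨p1, p2⟩ hp hq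
      simp only [Finset.mem_product, Finset.mem_singleton] at hp
      simp only [hE, Finset.mem_product, Finset.mem_erase] at hq
      exact hq.1.1 hp.1
    have hsum1 : ∑ p ∈ ({i} : Finset V) ×ˢ 𝔑 i, h p = ∑ j ∈ 𝔑 i, h (i, j) := by
      rw [Finset.sum_product, Finset.sum_singleton]
    have hsum2 : ∑ p ∈ E ×ˢ ({i} : Finset V), h p = ∑ j ∈ E, h (i, j) := by
      rw [Finset.sum_product]
      refine Finset.sum_congr rfl fun j hj => ?_
      rw [Finset.sum_singleton]
      exact hsymm j (Finset.mem_of_mem_erase hj)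
    have hsumS : ∑ p ∈ S, h p = 2 * ∑ j ∈ E, h (i, j) := by
      rw [hS, Finset.sum_union hdisj, hsum1, hsum2]
      have : ∑ j ∈ 𝔑 i, h (i, j) = ∑ j ∈ E, h (i, j) := by
        rw [hE]
        exact (Finset.sum_erase (𝔑 i) (f := fun j => h (i, j)) (a := i) hii).symm
      rw [this]; ring
    -- pointwise formula on E
    have hterm : ∀ j ∈ E, h (i, j) =
        (if X n j = a then w i j else 0) - (if X n j = b then w i j else 0) := by
      intro j hjE
      have hj : j ∈ 𝔑 i := Finset.mem_of_mem_erase hjE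
      have hji : j ≠ i := Finset.ne_of_mem_erase hjE
      have hXj' : X (n + 1) j = X n j := hXj j hji
      simp only [hh, hF, hj, true_and, hXj', ← hb, ← ha]
      by_cases h1 : X n j = a
      · rw [if_pos (show b ≠ X n j from fun hc => hba (hc.trans h1)),
          if_neg (not_ne_iff.mpr h1.symm), if_pos h1,
          if_neg (show ¬ X n j = b from fun hc => hba (hc.symm.trans h1))]
      · by_cases h2 : X n j = b
        · rw [if_neg (not_ne_iff.mpr h2.symm),
            if_pos (show a ≠ X n j from fun hc => h1 hc.symm),
            if_neg h1, if_pos h2]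
        · rw [if_pos (show b ≠ X n j from fun hc => h2 hc.symm),
            if_pos (show a ≠ X n j from fun hc => h1 hc.symm),
            if_neg h1, if_neg h2]
          ring
    -- counting
    set A : Finset V := (𝔑 i).filter (fun j => X n j = a) with hA
    set B : Finset V := (𝔑 i).filter (fun j => X n j = b) with hB
    have hiA : i ∈ A := by
      rw [hA, Finset.mem_filter]; exact ⟨hself i, rfl⟩
    have hiB : i ∉ B := by
      rw [hB, Finset.mem_filter]
      rintro ⟨-, hc⟩
      exact hba hc.symm
    have hEA : E.filter (fun j => X n j = a) = A.erase i := by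
      rw [hE, hA, Finset.filter_erase]
    have hEB : E.filter (fun j => X n j = b) = B := by
      rw [hE, hB, Finset.filter_erase, Finset.erase_eq_of_notMem hiB]
    have hcardlt : A.card < B.card := hstrict n hchange
    have hcardA : 1 ≤ A.card := Finset.card_pos.mpr ⟨i, hiA⟩
    have hcardB : B.card ≤ D := le_trans (Finset.card_filter_le _ _) (hcard i)
    -- the sum over E
    have hsplit : ∑ j ∈ E, h (i, j) =
        (∑ j ∈ A.erase i, w i j) - (∑ j ∈ B, w i j) := by
      rw [Finset.sum_congr rfl hterm, Finset.sum_sub_distrib, ← Finset.sum_filter,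
        ← Finset.sum_filter, hEA, hEB]
    have hub : ∑ j ∈ A.erase i, w i j ≤ ((A.card : ℝ) - 1) * wmax i := by
      have h1 : ∑ j ∈ A.erase i, w i j ≤ (A.erase i).card • wmax i := by
        refine Finset.sum_le_card_nsmul _ _ _ ?_
        intro j hj
        exact hwmaxle i j (Finset.filter_subset _ _ (Finset.mem_of_mem_erase hj))
      rw [Finset.card_erase_of_mem hiA, nsmul_eq_mul] at h1
      have : ((A.card - 1 : ℕ) : ℝ) = (A.card : ℝ) - 1 := by
        have := hcardA; push_cast [Nat.cast_sub this]; ring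
      rwa [this] at h1
    have hlb : (B.card : ℝ) * wmin i ≤ ∑ j ∈ B, w i j := by
      have h1 : B.card • wmin i ≤ ∑ j ∈ B, w i j := by
        refine Finset.card_nsmul_le_sum _ _ _ ?_
        intro j hj
        exact hwminle i j (Finset.filter_subset _ _ hj)
      rwa [nsmul_eq_mul] at h1
    have hED : ∑ j ∈ E, h (i, j) ≤ ((D : ℝ) - 2) * wmax i - (D : ℝ) * wmin i := by
      rw [hsplit]
      have hca : (A.card : ℝ) + 1 ≤ (B.card : ℝ) := by exact_mod_cast hcardlt
      have hcb : (B.card : ℝ) ≤ (D : ℝ) := by exact_mod_cast hcardB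
      have hca1 : (1 : ℝ) ≤ (A.card : ℝ) := by exact_mod_cast hcardA
      have hmm := hminmax i
      have hmp := hwminpos i
      nlinarith [hub, hlb,
        mul_nonneg (by linarith : (0:ℝ) ≤ (D:ℝ) - (B.card : ℝ))
          (by linarith : (0:ℝ) ≤ wmax i - wmin i),
        mul_nonneg (by linarith : (0:ℝ) ≤ (B.card:ℝ) - 1 - (A.card : ℝ))
          (by linarith : (0:ℝ) ≤ wmax i)]
    have : L (n + 1) ≤ L n + 2 * (((D : ℝ) - 2) * wmax i - (D : ℝ) * wmin i) := by
      rw [hLsplit, hsumS]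
      have := hED
      nlinarith
    rw [hε]
    simp only []
    linarith
  -- part (a)
  have parta : ∀ n, L (n + 1) ≤ L n := by
    intro n
    by_cases hc : X (n + 1) (upd n) = X n (upd n)
    · exact le_of_eq (hsame n hc)
    · have := key n hc
      have := hεpos (upd n)
      linarith
  have hanti : Antitone L := antitone_nat_of_succ_le parta
  -- stabilization
  have stab : ∀ i, ∃ n₀, ∀ m, n₀ ≤ m → X (m + 1) i = X m i := by
    intro i
    by_contra hcon
    push_neg at hcon
    -- for each k, L drops below L 0 - k * ε i
    have step : ∀ k : ℕ, ∃ n, L n ≤ L 0 - k * ε i := by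
      intro k
      induction k with
      | zero => exact ⟨0, by simp⟩
      | succ k ih =>
        obtain ⟨n, hn⟩ := ih
        obtain ⟨m, hm, hchg⟩ := hcon n
        have hupd : upd m = i := by
          by_contra hu
          exact hchg (hfreeze m i fun hc => hu hc.symm)
        have hk : L (m + 1) ≤ L m - ε i := by
          have := key m (by rw [hupd]; exact hchg)
          rwa [hupd] at this
        refine ⟨m + 1, ?_⟩
        have hmon : L m ≤ L n := hanti hm
        push_cast
        linarith
    obtain ⟨k, hk⟩ := exists_nat_gt (L 0 / ε i)
    obtain ⟨n, hn⟩ := step k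
    have hεi := hεpos i
    have : L 0 < k * ε i := by
      rw [div_lt_iff₀ hεi] at hk
      linarith
    have := hLnonneg n
    linarith
  refine ⟨parta, ?_, ?_⟩
  · intro i
    refine ⟨ε i, hεpos i, ?_⟩
    intro n hupd
    by_cases hc : X (n + 1) i = X n i
    · exact Or.inl hc
    · right
      have := key n (by rw [hupd]; exact hc)
      rwa [hupd] at this
  · intro i
    obtain ⟨n₀, hn₀⟩ := stab i
    refine ⟨n₀, ?_⟩
    intro n hn
    induction n, hn using Nat.le_induction with
    | base => rfl
    | succ n hn ih => rw [hn₀ n hn, ih]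
end

section
/- For the Schelling model on $\mathbb Z$ with window $w$, a set $A\subset\mathbb Z$ consisting of $w+1$ consecutive integers is stable (i.e., if all nodes in $A$ have opinion 1 and all other nodes opinion 2, then every node of $\mathbb Z$ agrees with the most common opinion in its neighborhood), and no nonempty connected stable set has diameter smaller than $w$. -/
/-- A two-opinion configuration `c : ℤ → Bool` is stable for window `w` if every node (weakly)
agrees with the most common opinion in its neighborhood `{i-w, …, i+w}`. -/
def IsStable1D (w : ℕ) (c : ℤ → Bool) : Prop :=
  ∀ i : ℤ, ∀ b : Bool,
    ((Finset.Icc (i - (w : ℤ)) (i + (w : ℤ))).filter fun j => c j = b).card ≤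
      ((Finset.Icc (i - (w : ℤ)) (i + (w : ℤ))).filter fun j => c j = c i).card

lemma cnt_true (lo hi a b : ℤ) :
    ((Finset.Icc lo hi).filter fun j => decide (a ≤ j ∧ j ≤ b) = true).card
      = (min hi b + 1 - max lo a).toNat := by
  have h : ((Finset.Icc lo hi).filter fun j => decide (a ≤ j ∧ j ≤ b) = true)
      = Finset.Icc (max lo a) (min hi b) := by
    ext j
    simp only [Finset.mem_filter, Finset.mem_Icc, decide_eq_true_eq, le_max_iff, min_le_iff,
      max_le_iff, le_min_iff]
    omega
  rw [h, Int.card_Icc]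

lemma cnt_false (lo hi a b : ℤ) :
    ((Finset.Icc lo hi).filter fun j => decide (a ≤ j ∧ j ≤ b) = false).card
      + (min hi b + 1 - max lo a).toNat = (hi + 1 - lo).toNat := by
  have hset : ((Finset.Icc lo hi).filter fun j => ¬ (decide (a ≤ j ∧ j ≤ b) = true))
      = ((Finset.Icc lo hi).filter fun j => decide (a ≤ j ∧ j ≤ b) = false) := by
    ext j; simp
  rw [← cnt_true lo hi a b, ← hset, Nat.add_comm,
    Finset.card_filter_add_card_filter_not, Int.card_Icc]

/-- For the Schelling model on `ℤ` with window `w`: any set of `w+1` consecutive integers is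
stable, and no nonempty connected (interval) stable set has diameter smaller than `w`. -/
theorem stmt12 (w : ℕ) :
    (∀ a : ℤ, IsStable1D w fun j => decide (a ≤ j ∧ j ≤ a + (w : ℤ))) ∧
    (∀ a b : ℤ, a ≤ b → b - a < (w : ℤ) →
      ¬ IsStable1D w fun j => decide (a ≤ j ∧ j ≤ b)) := by
  constructor
  · intro a i b
    have ht := cnt_true (i - (w : ℤ)) (i + (w : ℤ)) a (a + (w : ℤ))
    have hf := cnt_false (i - (w : ℤ)) (i + (w : ℤ)) a (a + (w : ℤ))
    by_cases hi : a ≤ i ∧ i ≤ a + (w : ℤ)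
    · have hci : decide (a ≤ i ∧ i ≤ a + (w : ℤ)) = true := by simpa using hi
      simp only [hci]
      obtain ⟨h1, h2⟩ := hi
      cases b
      · rw [ht]; omega
      · exact le_rfl
    · have hci : decide (a ≤ i ∧ i ≤ a + (w : ℤ)) = false := by simpa using hi
      simp only [hci]
      push_neg at hi
      cases b
      · exact le_rfl
      · rw [ht]; omega
  · intro a b hab hlt hst
    have h := hst a false
    have ht := cnt_true (a - (w : ℤ)) (a + (w : ℤ)) a b
    have hf := cnt_false (a - (w : ℤ)) (a + (w : ℤ)) a b
    have hca : decide (a ≤ a ∧ a ≤ b) = true := by simp [hab]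
    simp only [hca, ht] at h
    omega
end

section
/- Let $N>1$, $p\in[1,\infty]$, and let the neighborhood in the Schelling model on $\mathbb Z^N$ be $\mathfrak N(i)=\{j:\|j-i\|_p<w\}\cup\{i\}$ (the lattice $\ell^p$-ball of radius $w$). Then there exists a connected stable shape $A\subset\mathbb Z^N$ of diameter at most $C_N w^{N+1}$, where $C_N$ depends only on $N$. Specifically, starting from the cube $A_0=\{i:\|i\|_\infty\le r\}$ with $r=2^{2N}w^{N+1}$ and repeatedly removing unsatisfied nodes one at a time, the process terminates at a nonempty stable set. -/
open Set

/-- The lattice `ℓ^p`-ball neighborhood of radius `w` around `i ∈ ℤ^N` (for `1 ≤ p < ∞`),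
together with `i` itself. -/
def nbhdLp (N : ℕ) (p : ℝ) (w : ℕ) (i : Fin N → ℤ) : Set (Fin N → ℤ) :=
  insert i {j | (∑ d, |(j d : ℝ) - (i d : ℝ)| ^ p) < (w : ℝ) ^ p}

/-- The lattice `ℓ^∞`-ball neighborhood of radius `w` around `i ∈ ℤ^N`, together with `i`. -/
def nbhdLinf (N : ℕ) (w : ℕ) (i : Fin N → ℤ) : Set (Fin N → ℤ) :=
  insert i {j | ∀ d, |j d - i d| < (w : ℤ)}

/-- `A` is stable: with opinion 1 on `A` and opinion 2 elsewhere, every node weakly agrees with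
the most common opinion in its neighborhood. -/
def IsStableConf (N : ℕ) (𝔑 : (Fin N → ℤ) → Set (Fin N → ℤ))
    (A : Set (Fin N → ℤ)) : Prop :=
  ∀ i, {j ∈ 𝔑 i | ¬ (j ∈ A ↔ i ∈ A)}.ncard ≤ {j ∈ 𝔑 i | j ∈ A ↔ i ∈ A}.ncard

/-- `A ⊆ ℤ^N` is connected: any two points are joined by an `ℓ¹`-nearest-neighbor path in `A`. -/
def IsConn (N : ℕ) (A : Set (Fin N → ℤ)) : Prop :=
  ∀ i ∈ A, ∀ j ∈ A, ∃ n : ℕ, ∃ f : ℕ → Fin N → ℤ,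
    f 0 = i ∧ f n = j ∧ (∀ k ≤ n, f k ∈ A) ∧
    ∀ k < n, (∑ d, |f (k + 1) d - f k d|) ≤ 1

/-! Each neighbourhood is a translate `i + S` of a finite set `S` that is *solid*: closed under
shrinking coordinates in absolute value. Start from a large cube and repeatedly either remove all
unsatisfied members or add all unsatisfied non-members inside the cube. By a reflection argument
a node sees at least as much of a solid set as any node farther from the origin, so every stage
stays solid. Each round lowers the edge boundary by at least twice the number of flipped nodes,
while the cube's edge boundary is less than twice its volume, so the process stops at a nonempty
stable solid set, which is connected because every point walks to the origin inside it. -/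

open Finset LatticeOrderedAddCommGroup Function

lemma Pi.abs_le_abs_iff {ι : Type*} {x y : ι → ℤ} : |y| ≤ |x| ↔ ∀ d, |y d| ≤ |x d| := by
  simp only [Pi.le_def, Pi.abs_apply]

namespace LatticeOrderedAddCommGroup

variable {ι : Type*} {s : Set (ι → ℤ)} {x y : ι → ℤ}

lemma IsSolid.mem_of_abs_le (hs : IsSolid s) (hx : x ∈ s) (h : ∀ d, |y d| ≤ |x d|) : y ∈ s :=
  hs hx (Pi.abs_le_abs_iff.2 h)

lemma IsSolid.mem_iff_of_abs_eq (hs : IsSolid s) (h : ∀ d, |y d| = |x d|) : y ∈ s ↔ x ∈ s :=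
  ⟨fun hy => hs.mem_of_abs_le hy fun d => (h d).ge, fun hx => hs.mem_of_abs_le hx fun d => (h d).le⟩

lemma IsSolid.zero_mem (hs : IsSolid s) (hx : x ∈ s) : 0 ∈ s :=
  hs.mem_of_abs_le hx fun _ => by simp

lemma IsSolid.sub_mem_comm (hs : IsSolid s) : x - y ∈ s ↔ y - x ∈ s :=
  hs.mem_iff_of_abs_eq fun _ => abs_sub_comm _ _

lemma IsSolid.union {t : Set (ι → ℤ)} (hs : IsSolid s) (ht : IsSolid t) : IsSolid (s ∪ t) := by
  rintro x (hx | hx) y hy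
  exacts [Or.inl (hs hx hy), Or.inr (ht hx hy)]

end LatticeOrderedAddCommGroup

namespace Schelling

variable {N m r w : ℕ} {S A B U W : Finset (Fin N → ℤ)} {i j v x y : Fin N → ℤ}

noncomputable def box (N m : ℕ) : Finset (Fin N → ℤ) := Fintype.piFinset fun _ => Icc (-(m : ℤ)) m

lemma mem_box : x ∈ box N m ↔ ∀ d, |x d| ≤ m := by
  simp [box, abs_le]

lemma card_box : #(box N m) = (2 * m + 1) ^ N := by
  simp only [box, Fintype.card_piFinset, Int.card_Icc, prod_const, card_univ, Fintype.card_fin]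
  congr 1
  omega

lemma box_mono (h : m ≤ r) : box N m ⊆ box N r := fun x hx =>
  mem_box.2 fun d => (mem_box.1 hx d).trans (by exact_mod_cast h)

lemma isSolid_box : IsSolid (box N m : Set (Fin N → ℤ)) := fun _ hx _ hy =>
  mem_box.2 fun d => (Pi.abs_le_abs_iff.1 hy d).trans (mem_box.1 hx d)

lemma zero_mem_box : (0 : Fin N → ℤ) ∈ box N m :=
  mem_box.2 fun d => by simp

lemma abs_sub_le_of_mem_box (hi : i ∈ box N m) (hj : j ∈ box N m) (d : Fin N) :
    |i d - j d| ≤ 2 * m := by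
  have := mem_box.1 hi d
  have := mem_box.1 hj d
  grind

def nbhd (S : Finset (Fin N → ℤ)) (i : Fin N → ℤ) : Finset (Fin N → ℤ) :=
  S.map (addLeftEmbedding i)

lemma mem_nbhd : j ∈ nbhd S i ↔ j - i ∈ S := by
  simp [nbhd, ← eq_sub_iff_add_eq']

lemma card_nbhd : #(nbhd S i) = #S := card_map _

def nbhdCount (S A : Finset (Fin N → ℤ)) (i : Fin N → ℤ) : ℕ := #{j ∈ A | j - i ∈ S}

lemma card_filter_nbhd_mem : #{j ∈ nbhd S i | j ∈ A} = nbhdCount S A i := by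
  rw [nbhdCount]
  congr 1
  ext j
  simp [mem_nbhd, and_comm]

lemma nbhdCount_le_card : nbhdCount S A i ≤ #S := by
  rw [← card_filter_nbhd_mem (A := A), ← card_nbhd (S := S) (i := i)]
  exact card_filter_le _ _

lemma card_filter_nbhd_notMem : #{j ∈ nbhd S i | j ∉ A} = #S - nbhdCount S A i := by
  have h := card_filter_add_card_filter_not (s := nbhd S i) (fun j => j ∈ A)
  rw [card_filter_nbhd_mem, card_nbhd] at h
  omega

lemma nbhdCount_union (h : Disjoint A W) (i : Fin N → ℤ) :
    nbhdCount S (A ∪ W) i = nbhdCount S A i + nbhdCount S W i := by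
  rw [nbhdCount, filter_union, card_union_of_disjoint (disjoint_filter_filter h)]
  rfl

lemma sum_nbhdCount_comm (hS : IsSolid (S : Set (Fin N → ℤ))) :
    ∑ i ∈ A, nbhdCount S W i = ∑ j ∈ W, nbhdCount S A j := by
  refine (sum_card_bipartiteAbove_eq_sum_card_bipartiteBelow (fun i j => j - i ∈ S)).trans
    (sum_congr rfl fun j _ => ?_)
  exact congrArg card (filter_congr fun i _ => hS.sub_mem_comm)

lemma nbhdCount_le_nbhdCount_update (hS : IsSolid (S : Set (Fin N → ℤ)))
    (hA : IsSolid (A : Set (Fin N → ℤ))) (x : Fin N → ℤ) (d : Fin N) {t : ℤ} (ht : |t| ≤ |x d|) :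
    nbhdCount S A x ≤ nbhdCount S A (update x d t) := by
  set y := update x d t
  -- the reflection exchanging the hyperplanes `{j d = x d}` and `{j d = t}`
  set σ : (Fin N → ℤ) → (Fin N → ℤ) := fun j => update j d (x d + t - j d)
  have hσσ : ∀ j, σ (σ j) = j := fun j => by
    ext e
    by_cases he : e = d <;> simp [σ, he]
  have hσy : ∀ j, σ j - y ∈ S ↔ j - x ∈ S := fun j => hS.mem_iff_of_abs_eq fun e => by
    by_cases he : e = d
    · subst he
      simp only [σ, y, Pi.sub_apply, update_self]
      rw [← abs_neg]
      ring_nf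
    · simp [σ, y, he]
  have hσA : ∀ j ∈ A, j - x ∈ S → j - y ∉ S → σ j ∈ A := by
    intro j hj hjx hjy
    have hd : |j d - x d| < |j d - t| := by
      by_contra! h
      exact hjy (hS.mem_of_abs_le hjx fun e => by by_cases he : e = d <;> simp [y, he, h])
    refine hA.mem_of_abs_le hj fun e => ?_
    by_cases he : e = d
    · subst he
      simp only [σ, update_self]
      grind
    · simp [σ, he]
  refine card_le_card_of_injOn (fun j => if j - y ∈ S then j else σ j) ?_ ?_
  · intro j hj
    simp only [coe_filter, Set.mem_ofPred_eq] at hj ⊢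
    split_ifs with h
    · exact ⟨hj.1, h⟩
    · exact ⟨hσA j hj.1 hj.2 h, (hσy j).2 hj.2⟩
  · intro j₁ hj₁ j₂ hj₂ h
    simp only [coe_filter, Set.mem_ofPred_eq] at hj₁ hj₂ h
    split_ifs at h with h₁ h₂ h₂
    · exact h
    · exact (h₂ (by rw [← hσσ j₂, ← h]; exact (hσy j₁).2 hj₁.2)).elim
    · exact (h₁ (by rw [← hσσ j₁, h]; exact (hσy j₂).2 hj₂.2)).elim
    · rw [← hσσ j₁, h, hσσ]

lemma nbhdCount_le_nbhdCount_of_abs_le (hS : IsSolid (S : Set (Fin N → ℤ)))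
    (hA : IsSolid (A : Set (Fin N → ℤ))) (h : ∀ d, |y d| ≤ |x d|) :
    nbhdCount S A x ≤ nbhdCount S A y := by
  classical
  have key : ∀ D : Finset (Fin N),
      nbhdCount S A x ≤ nbhdCount S A fun e => if e ∈ D then y e else x e := by
    intro D
    induction D using Finset.induction_on with
    | empty => simp
    | insert a D ha ih =>
      have hupd : (fun e => if e ∈ insert a D then y e else x e) =
          update (fun e => if e ∈ D then y e else x e) a (y a) := by
        ext e
        by_cases he : e = a <;> simp [he, ha]
      rw [hupd]
      exact ih.trans (nbhdCount_le_nbhdCount_update hS hA _ a (by simpa [ha] using h a))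
  simpa using key univ

lemma two_mul_nbhdCount_le_of_notMem_box (hS : IsSolid (S : Set (Fin N → ℤ))) (hA : A ⊆ box N r)
    (hv : v ∉ box N r) : 2 * nbhdCount S A v ≤ #S := by
  obtain ⟨d, hd⟩ : ∃ d, (r : ℤ) < |v d| := by simpa [mem_box] using hv
  -- reflecting in the hyperplane `{j d = v d}` moves every neighbour of `v` in `A` out of `A`
  set σ : (Fin N → ℤ) → (Fin N → ℤ) := fun j => update j d (2 * v d - j d)
  have hσ : Injective σ := fun j₁ j₂ h => by
    ext e
    have := congrFun h e
    by_cases he : e = d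
    · subst he; simp only [σ, update_self] at this; omega
    · simpa [σ, he] using this
  have hσS : ∀ j, σ j - v ∈ S ↔ j - v ∈ S := fun j => hS.mem_iff_of_abs_eq fun e => by
    by_cases he : e = d
    · subst he
      simp only [σ, Pi.sub_apply, update_self]
      rw [← abs_neg]
      ring_nf
    · simp [σ, he]
  set D := {j ∈ A | j - v ∈ S}
  have hD : D ⊆ nbhd S v := fun j hj => mem_nbhd.2 (mem_filter.1 hj).2
  have : #D ≤ #(nbhd S v \ D) := by
    refine card_le_card_of_injOn σ (fun j hj => ?_) hσ.injOn
    simp only [D, coe_filter, Set.mem_ofPred_eq, coe_sdiff, Set.mem_sdiff, mem_coe,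
      mem_nbhd] at hj ⊢
    refine ⟨(hσS j).2 hj.2, fun h => ?_⟩
    have h1 := mem_box.1 (hA h.1) d
    have h2 := mem_box.1 (hA hj.1) d
    simp only [σ, update_self] at h1
    grind
  rw [card_sdiff_of_subset hD, card_nbhd] at this
  change 2 * #D ≤ #S
  omega

def energy (S A : Finset (Fin N → ℤ)) : ℕ := ∑ i ∈ A, nbhdCount S A i

/-- The number of pairs `(i, j)` with `i ∈ A`, `j ∉ A` and `j - i ∈ S`. -/
def edgeBoundary (S A : Finset (Fin N → ℤ)) : ℕ := ∑ i ∈ A, (#S - nbhdCount S A i)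

lemma edgeBoundary_add_energy : edgeBoundary S A + energy S A = #S * #A := by
  rw [edgeBoundary, energy, ← sum_add_distrib,
    sum_congr rfl fun i _ => Nat.sub_add_cancel nbhdCount_le_card, sum_const, smul_eq_mul, mul_comm]

lemma card_le_energy (h0 : 0 ∈ S) : #A ≤ energy S A := by
  rw [card_eq_sum_ones]
  exact sum_le_sum fun i hi => card_pos.2 ⟨i, mem_filter.2 ⟨hi, by simpa using h0⟩⟩

lemma energy_union (hS : IsSolid (S : Set (Fin N → ℤ))) (h : Disjoint A W) :
    energy S (A ∪ W) = energy S A + 2 * ∑ j ∈ W, nbhdCount S A j + energy S W := by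
  simp only [energy, sum_union h, nbhdCount_union h, sum_add_distrib]
  rw [sum_nbhdCount_comm hS (A := A) (W := W)]
  ring

lemma edgeBoundary_union_add_le (hS : IsSolid (S : Set (Fin N → ℤ))) (h0 : 0 ∈ S)
    (h : Disjoint A W) (hW : ∀ j ∈ W, #S < 2 * nbhdCount S A j) :
    edgeBoundary S (A ∪ W) + 2 * #W ≤ edgeBoundary S A := by
  have hsum : #S * #W + #W ≤ 2 * ∑ j ∈ W, nbhdCount S A j :=
    calc #S * #W + #W = ∑ _j ∈ W, (#S + 1) := by rw [sum_const, smul_eq_mul]; ring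
      _ ≤ ∑ j ∈ W, 2 * nbhdCount S A j := sum_le_sum hW
      _ = 2 * ∑ j ∈ W, nbhdCount S A j := (mul_sum ..).symm
  have := energy_union hS h
  have := card_le_energy (A := W) h0
  have := edgeBoundary_add_energy (S := S) (A := A)
  have := edgeBoundary_add_energy (S := S) (A := A ∪ W)
  rw [card_union_of_disjoint h, mul_add] at this
  omega

lemma edgeBoundary_sdiff_add_le (hS : IsSolid (S : Set (Fin N → ℤ))) (h0 : 0 ∈ S)
    (hU : U ⊆ A) (hUns : ∀ j ∈ U, 2 * nbhdCount S A j < #S) :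
    edgeBoundary S (A \ U) + 2 * #U ≤ edgeBoundary S A := by
  have hd : Disjoint (A \ U) U := sdiff_disjoint
  have hA : A \ U ∪ U = A := sdiff_union_of_subset hU
  have hsum : 2 * ∑ j ∈ U, nbhdCount S A j + #U ≤ #S * #U :=
    calc 2 * ∑ j ∈ U, nbhdCount S A j + #U = ∑ j ∈ U, (2 * nbhdCount S A j + 1) := by
          rw [sum_add_distrib, mul_sum, sum_const, smul_eq_mul, mul_one]
      _ ≤ ∑ _j ∈ U, #S := sum_le_sum hUns
      _ = #S * #U := by rw [sum_const, smul_eq_mul, mul_comm]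
  have hcount : ∑ j ∈ U, nbhdCount S A j = ∑ j ∈ U, nbhdCount S (A \ U) j + energy S U := by
    rw [energy, ← sum_add_distrib]
    exact sum_congr rfl fun j _ => by rw [← nbhdCount_union hd, hA]
  have hE := energy_union hS hd
  rw [hA] at hE
  have := card_le_energy (A := U) h0
  have := edgeBoundary_add_energy (S := S) (A := A \ U)
  have := edgeBoundary_add_energy (S := S) (A := A)
  have : #S * #(A \ U) + #S * #U = #S * #A := by rw [← mul_add, card_sdiff_add_card_eq_card hU]
  omega

def IsStable (S B : Finset (Fin N → ℤ)) : Prop :=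
  (∀ i ∈ B, #S ≤ 2 * nbhdCount S B i) ∧ ∀ i ∉ B, 2 * nbhdCount S B i ≤ #S

lemma isSolid_filter_nbhdCount (hS : IsSolid (S : Set (Fin N → ℤ)))
    (hA : IsSolid (A : Set (Fin N → ℤ))) {C : Finset (Fin N → ℤ)}
    (hC : IsSolid (C : Set (Fin N → ℤ))) {P : ℕ → Prop} [DecidablePred P] (hP : Monotone P) :
    IsSolid (({i ∈ C | P (nbhdCount S A i)} : Finset _) : Set (Fin N → ℤ)) := by
  intro x hx y hy
  simp only [coe_filter, Set.mem_ofPred_eq] at hx ⊢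
  exact ⟨hC hx.1 hy, hP (nbhdCount_le_nbhdCount_of_abs_le hS hA (Pi.abs_le_abs_iff.1 hy)) hx.2⟩

lemma isSolid_sdiff_filter_nbhdCount_lt (hS : IsSolid (S : Set (Fin N → ℤ)))
    (hA : IsSolid (A : Set (Fin N → ℤ))) :
    IsSolid ((A \ {i ∈ A | 2 * nbhdCount S A i < #S} : Finset _) : Set (Fin N → ℤ)) := by
  rw [← filter_not]
  simp only [not_lt]
  exact isSolid_filter_nbhdCount hS hA hA (P := fun c => #S ≤ 2 * c) fun _ _ hab h =>
    h.trans (Nat.mul_le_mul_left 2 hab)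

lemma isSolid_union_filter_lt_nbhdCount (hS : IsSolid (S : Set (Fin N → ℤ)))
    (hA : IsSolid (A : Set (Fin N → ℤ))) :
    IsSolid ((A ∪ {i ∈ box N r | #S < 2 * nbhdCount S A i} \ A : Finset _) :
      Set (Fin N → ℤ)) := by
  rw [union_sdiff_self_eq_union, coe_union]
  exact hA.union (isSolid_filter_nbhdCount hS hA isSolid_box (P := fun c => #S < 2 * c)
    fun _ _ hab h => h.trans_le (Nat.mul_le_mul_left 2 hab))

theorem exists_isStable (hS : IsSolid (S : Set (Fin N → ℤ))) (h0 : 0 ∈ S) (r : ℕ)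
    (A : Finset (Fin N → ℤ)) (hAr : A ⊆ box N r) (hA : IsSolid (A : Set (Fin N → ℤ))) :
    ∃ B ⊆ box N r, IsSolid (B : Set (Fin N → ℤ)) ∧ IsStable S B ∧
      2 * #A ≤ 2 * #B + edgeBoundary S A := by
  induction hn : edgeBoundary S A using Nat.strong_induction_on generalizing A with
  | _ n ih =>
  set U := {i ∈ A | 2 * nbhdCount S A i < #S}
  set W := {i ∈ box N r | #S < 2 * nbhdCount S A i} \ A
  by_cases hU : U.Nonempty
  · have hUA : U ⊆ A := filter_subset _ A
    have hdec := edgeBoundary_sdiff_add_le hS h0 hUA fun i hi => (mem_filter.1 hi).2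
    obtain ⟨B, hBr, hB, hBst, hcard⟩ := ih _ (by have := hU.card_pos; omega) (A \ U)
      (sdiff_subset.trans hAr) (isSolid_sdiff_filter_nbhdCount_lt hS hA) rfl
    have := card_sdiff_add_card_eq_card hUA
    exact ⟨B, hBr, hB, hBst, by omega⟩
  by_cases hW : W.Nonempty
  · have hdec := edgeBoundary_union_add_le (A := A) (W := W) hS h0 disjoint_sdiff fun i hi =>
      (mem_filter.1 (mem_sdiff.1 hi).1).2
    obtain ⟨B, hBr, hB, hBst, hcard⟩ := ih _ (by have := hW.card_pos; omega) (A ∪ W)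
      (union_subset hAr (sdiff_subset.trans (filter_subset _ _)))
      (isSolid_union_filter_lt_nbhdCount hS hA) rfl
    have := Finset.card_le_card (subset_union_left (s₁ := A) (s₂ := W))
    exact ⟨B, hBr, hB, hBst, by omega⟩
  refine ⟨A, hAr, hA, ⟨fun i hi => ?_, fun i hi => ?_⟩, by omega⟩
  · by_contra! h
    exact hU ⟨i, mem_filter.2 ⟨hi, h⟩⟩
  · by_cases hir : i ∈ box N r
    · by_contra! h
      exact hW ⟨i, mem_sdiff.2 ⟨mem_filter.2 ⟨hir, h⟩, hi⟩⟩
    · exact two_mul_nbhdCount_le_of_notMem_box hS hAr hir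

lemma nbhdCount_box_add_eq (hSw : S ⊆ box N w) (hi : i ∈ box N m) :
    nbhdCount S (box N (m + w)) i = #S := by
  rw [← card_filter_nbhd_mem, ← card_nbhd (S := S) (i := i), filter_true_of_mem]
  intro j hj
  refine mem_box.2 fun d => ?_
  have h1 := mem_box.1 hi d
  have h2 := mem_box.1 (hSw (mem_nbhd.1 hj)) d
  simp only [Pi.sub_apply] at h2
  push_cast
  grind

lemma edgeBoundary_box_add_le (hSw : S ⊆ box N w) :
    edgeBoundary S (box N (m + w)) ≤ #S * (#(box N (m + w)) - #(box N m)) := by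
  have hsub : box N m ⊆ box N (m + w) := box_mono (Nat.le_add_right m w)
  rw [edgeBoundary, ← sum_sdiff hsub,
    sum_eq_zero (s := box N m) fun i hi => by rw [nbhdCount_box_add_eq hSw hi, Nat.sub_self],
    add_zero, ← card_sdiff_of_subset hsub, mul_comm]
  exact sum_le_card_nsmul _ _ _ fun i _ => Nat.sub_le _ _

lemma add_pow_mul_le (b c n : ℕ) :
    (b + c) ^ n * (b + c) ≤ b ^ n * (b + c) + n * c * (b + c) ^ n := by
  induction n with
  | zero => simp
  | succ n ih =>
    have hb : b ^ n ≤ (b + c) ^ n := Nat.pow_le_pow_left (Nat.le_add_right b c) n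
    calc (b + c) ^ (n + 1) * (b + c) = (b + c) ^ n * (b + c) * (b + c) := by ring
      _ ≤ (b ^ n * (b + c) + n * c * (b + c) ^ n) * (b + c) := Nat.mul_le_mul_right _ ih
      _ = b ^ (n + 1) * (b + c) + b ^ n * c * (b + c) + n * c * (b + c) ^ (n + 1) := by ring
      _ ≤ b ^ (n + 1) * (b + c) + (b + c) ^ n * c * (b + c) + n * c * (b + c) ^ (n + 1) := by
        gcongr
      _ = b ^ (n + 1) * (b + c) + (n + 1) * c * (b + c) ^ (n + 1) := by ring

/-- Chosen so that `N * w * (2 * w + 1) ^ N < 2 * radius N w + 1`, which is what makes the edge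
boundary of the cube smaller than twice its volume. -/
def radius (N w : ℕ) : ℕ := N * w * (2 * w + 1) ^ N + w

lemma radius_le (hw : 1 ≤ w) : radius N w ≤ (N + 1) * 3 ^ N * w ^ (N + 1) := by
  have h1 : (2 * w + 1) ^ N ≤ (3 * w) ^ N := Nat.pow_le_pow_left (by omega) N
  have h2 : 1 ≤ (3 * w) ^ N := Nat.one_le_pow _ _ (by omega)
  calc radius N w ≤ N * w * (3 * w) ^ N + w * (3 * w) ^ N :=
        add_le_add (Nat.mul_le_mul_left _ h1) (Nat.le_mul_of_pos_right w h2)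
    _ = (N + 1) * 3 ^ N * w ^ (N + 1) := by ring

lemma edgeBoundary_box_radius_lt (hSw : S ⊆ box N w) :
    edgeBoundary S (box N (radius N w)) < 2 * #(box N (radius N w)) := by
  rw [radius]
  set m := N * w * (2 * w + 1) ^ N
  set a := 2 * (m + w) + 1
  have hS : #S ≤ (2 * w + 1) ^ N := (Finset.card_le_card hSw).trans card_box.le
  have hshell : (a ^ N - (2 * m + 1) ^ N) * a ≤ N * (2 * w) * a ^ N := by
    have := add_pow_mul_le (2 * m + 1) (2 * w) N
    rw [show 2 * m + 1 + 2 * w = a by omega] at this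
    rw [Nat.sub_mul]
    omega
  have hE := edgeBoundary_box_add_le (m := m) hSw
  simp only [card_box] at hE ⊢
  refine lt_of_mul_lt_mul_right (a := a) ?_ (Nat.zero_le a)
  calc edgeBoundary S (box N (m + w)) * a ≤ (2 * w + 1) ^ N * (a ^ N - (2 * m + 1) ^ N) * a :=
        Nat.mul_le_mul_right _ (hE.trans (Nat.mul_le_mul_right _ hS))
    _ ≤ (2 * w + 1) ^ N * (N * (2 * w) * a ^ N) := by
        rw [mul_assoc]; exact Nat.mul_le_mul_left _ hshell
    _ = 2 * m * a ^ N := by ring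
    _ < 2 * a * a ^ N := by gcongr; omega
    _ = 2 * a ^ N * a := by ring

def latticeGraph (N : ℕ) : SimpleGraph (Fin N → ℤ) :=
  SimpleGraph.fromRel fun x y => ∑ d, |y d - x d| ≤ 1

lemma latticeGraph_adj : (latticeGraph N).Adj x y ↔ x ≠ y ∧ ∑ d, |y d - x d| ≤ 1 := by
  have : ∑ d, |x d - y d| = ∑ d, |y d - x d| := sum_congr rfl fun d _ => abs_sub_comm _ _
  rw [latticeGraph, SimpleGraph.fromRel_adj, this, or_self]

lemma isConn_of_reachable {A : Set (Fin N → ℤ)}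
    (h : ∀ i j : A, ((latticeGraph N).induce A).Reachable i j) : IsConn N A := by
  intro i hi j hj
  obtain ⟨p⟩ := h ⟨i, hi⟩ ⟨j, hj⟩
  refine ⟨p.length, fun k => p.getVert k, by simp, by simp, fun k _ => (p.getVert k).2,
    fun k hk => ?_⟩
  exact (latticeGraph_adj.1 (SimpleGraph.induce_adj.1 (p.adj_getVert_succ hk))).2

lemma sum_abs_update_sub (x : Fin N → ℤ) (d : Fin N) (t : ℤ) :
    ∑ e, |update x d t e - x e| = |t - x d| := by
  rw [sum_eq_single d (fun e _ he => by simp [he]) (by simp)]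
  simp

lemma reachable_zero_of_isSolid {B : Set (Fin N → ℤ)} (hB : IsSolid B) (x : B) :
    ((latticeGraph N).induce B).Reachable x ⟨0, hB.zero_mem x.2⟩ := by
  induction hn : ∑ d, ((x : Fin N → ℤ) d).natAbs using Nat.strong_induction_on generalizing x with
  | _ n ih =>
  obtain ⟨x, hx⟩ := x
  by_cases hx0 : x = 0
  · subst hx0
    rfl
  obtain ⟨d, hd⟩ : ∃ d, x d ≠ 0 := by
    by_contra! h
    exact hx0 (funext h)
  obtain ⟨t, hlt, hstep⟩ : ∃ t : ℤ, |t| < |x d| ∧ |t - x d| = 1 := by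
    rcases hd.lt_or_gt with h | h
    · exact ⟨x d + 1, by grind, by simp⟩
    · exact ⟨x d - 1, by grind, by simp⟩
  have habs : ∀ e, |update x d t e| ≤ |x e| := fun e => by
    by_cases he : e = d
    · subst he; simpa using hlt.le
    · simp [he]
  have hadj : ((latticeGraph N).induce B).Adj ⟨x, hx⟩ ⟨update x d t, hB.mem_of_abs_le hx habs⟩ := by
    refine SimpleGraph.induce_adj.2 (latticeGraph_adj.2 ⟨fun h => ?_, ?_⟩)
    · have := congrFun h d
      simp only [update_self] at this
      rw [this] at hlt
      exact hlt.ne rfl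
    · simp [sum_abs_update_sub, hstep]
  refine hadj.reachable.trans (ih _ ?_ _ rfl)
  rw [← hn]
  refine sum_lt_sum (fun e _ => ?_) ⟨d, mem_univ d, ?_⟩
  · have := habs e
    grind
  · simp only [update_self]
    grind

lemma isConn_of_isSolid {B : Set (Fin N → ℤ)} (hB : IsSolid B) : IsConn N B :=
  isConn_of_reachable fun i j =>
    (reachable_zero_of_isSolid hB i).trans (reachable_zero_of_isSolid hB j).symm

lemma ncard_filter_mem {𝔑 : Set (Fin N → ℤ)} (h𝔑 : ∀ j, j ∈ 𝔑 ↔ j - i ∈ S) :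
    {j ∈ 𝔑 | j ∈ B}.ncard = nbhdCount S B i := by
  rw [← card_filter_nbhd_mem, ← Set.ncard_coe_finset]
  congr 1
  ext j
  simp [h𝔑, mem_nbhd]

lemma ncard_filter_notMem {𝔑 : Set (Fin N → ℤ)} (h𝔑 : ∀ j, j ∈ 𝔑 ↔ j - i ∈ S) :
    {j ∈ 𝔑 | j ∉ B}.ncard = #S - nbhdCount S B i := by
  rw [← card_filter_nbhd_notMem, ← Set.ncard_coe_finset]
  congr 1
  ext j
  simp [h𝔑, mem_nbhd]

lemma isStableConf_of_isStable (hB : IsStable S B) {𝔑 : (Fin N → ℤ) → Set (Fin N → ℤ)}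
    (h𝔑 : ∀ i j, j ∈ 𝔑 i ↔ j - i ∈ S) : IsStableConf N 𝔑 B := by
  intro i
  have := nbhdCount_le_card (S := S) (A := B) (i := i)
  by_cases hi : i ∈ B
  · simp only [mem_coe, hi, iff_true]
    rw [ncard_filter_notMem (h𝔑 i), ncard_filter_mem (h𝔑 i)]
    have := hB.1 i hi
    omega
  · simp only [mem_coe, hi, iff_false, not_not]
    rw [ncard_filter_notMem (h𝔑 i), ncard_filter_mem (h𝔑 i)]
    have := hB.2 i hi
    omega

lemma exists_stable_shape (hw : 1 ≤ w) (hS : IsSolid (S : Set (Fin N → ℤ))) (h0 : 0 ∈ S)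
    (hSw : S ⊆ box N w) {𝔑 : (Fin N → ℤ) → Set (Fin N → ℤ)} (h𝔑 : ∀ i j, j ∈ 𝔑 i ↔ j - i ∈ S) :
    ∃ A : Set (Fin N → ℤ), A.Nonempty ∧ IsConn N A ∧ IsStableConf N 𝔑 A ∧
      ∀ i ∈ A, ∀ j ∈ A, ∀ d : Fin N,
        ((|i d - j d| : ℤ) : ℝ) ≤ 2 * (N + 1) * 3 ^ N * (w : ℝ) ^ (N + 1) := by
  obtain ⟨B, hBr, hB, hBst, hcard⟩ :=
    exists_isStable hS h0 (radius N w) _ Finset.Subset.rfl isSolid_box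
  have := edgeBoundary_box_radius_lt hSw
  refine ⟨B, card_pos.1 (by omega), isConn_of_isSolid hB, isStableConf_of_isStable hBst h𝔑,
    fun i hi j hj d => ?_⟩
  calc ((|i d - j d| : ℤ) : ℝ) ≤ ((2 * radius N w : ℕ) : ℝ) := by
        exact_mod_cast abs_sub_le_of_mem_box (hBr hi) (hBr hj) d
    _ ≤ ((2 * ((N + 1) * 3 ^ N * w ^ (N + 1)) : ℕ) : ℝ) := by
        exact_mod_cast Nat.mul_le_mul_left 2 (radius_le hw)
    _ = 2 * (N + 1) * 3 ^ N * (w : ℝ) ^ (N + 1) := by push_cast; ring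

noncomputable def ballLp (N : ℕ) (p : ℝ) (w : ℕ) : Finset (Fin N → ℤ) :=
  {s ∈ box N w | ∑ d, |(s d : ℝ)| ^ p < (w : ℝ) ^ p}

lemma isSolid_ballLp {p : ℝ} (hp : 0 ≤ p) : IsSolid (ballLp N p w : Set (Fin N → ℤ)) := by
  intro x hx y hy
  simp only [ballLp, coe_filter, Set.mem_ofPred_eq] at hx ⊢
  refine ⟨isSolid_box hx.1 hy, lt_of_le_of_lt (sum_le_sum fun d _ => ?_) hx.2⟩
  have : |(y d : ℝ)| ≤ |(x d : ℝ)| := by exact_mod_cast Pi.abs_le_abs_iff.1 hy d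
  exact Real.rpow_le_rpow (abs_nonneg _) this hp

lemma zero_mem_ballLp {p : ℝ} (hp : 0 < p) (hw : 1 ≤ w) : (0 : Fin N → ℤ) ∈ ballLp N p w := by
  refine mem_filter.2 ⟨zero_mem_box, ?_⟩
  simp only [Pi.zero_apply, Int.cast_zero, abs_zero, Real.zero_rpow hp.ne', sum_const_zero]
  positivity

lemma mem_nbhdLp_iff {p : ℝ} (hp : 0 < p) (hw : 1 ≤ w) :
    j ∈ nbhdLp N p w i ↔ j - i ∈ ballLp N p w := by
  have hsum : ∑ d, |(j d : ℝ) - i d| ^ p = ∑ d, |((j - i) d : ℝ)| ^ p := by simp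
  rw [nbhdLp, Set.mem_insert_iff, Set.mem_ofPred_eq, hsum, ballLp, mem_filter]
  constructor
  · rintro (rfl | h)
    · rw [sub_self]
      exact mem_filter.1 (zero_mem_ballLp hp hw)
    · refine ⟨mem_box.2 fun d => ?_, h⟩
      have hd : |((j - i) d : ℝ)| ^ p < (w : ℝ) ^ p :=
        (single_le_sum (f := fun d => |((j - i) d : ℝ)| ^ p) (fun _ _ => by positivity)
          (mem_univ d)).trans_lt h
      rw [Real.rpow_lt_rpow_iff (abs_nonneg _) (Nat.cast_nonneg _) hp] at hd
      exact_mod_cast hd.le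
  · exact fun h => Or.inr h.2

lemma mem_nbhdLinf_iff : j ∈ nbhdLinf N w i ↔ j - i ∈ box N (w - 1) := by
  rw [nbhdLinf, Set.mem_insert_iff, Set.mem_ofPred_eq, mem_box]
  constructor
  · rintro (rfl | h) d
    · simp
    · have := h d
      simp only [Pi.sub_apply]
      omega
  · intro h
    by_cases hw : w = 0
    · left
      ext d
      have := h d
      simp only [hw, Pi.sub_apply] at this
      grind
    · exact Or.inr fun d => by have := h d; simp only [Pi.sub_apply] at this; omega

end Schelling

theorem stmt13_general (N : ℕ) :
    ∃ C : ℝ, 0 < C ∧ ∀ w : ℕ, 1 ≤ w →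
      (∀ p : ℝ, 1 ≤ p → ∃ A : Set (Fin N → ℤ), A.Nonempty ∧
        IsConn N A ∧ IsStableConf N (nbhdLp N p w) A ∧
        ∀ i ∈ A, ∀ j ∈ A, ∀ d : Fin N,
          ((|i d - j d| : ℤ) : ℝ) ≤ C * (w : ℝ) ^ (N + 1)) ∧
      (∃ A : Set (Fin N → ℤ), A.Nonempty ∧
        IsConn N A ∧ IsStableConf N (nbhdLinf N w) A ∧
        ∀ i ∈ A, ∀ j ∈ A, ∀ d : Fin N,
          ((|i d - j d| : ℤ) : ℝ) ≤ C * (w : ℝ) ^ (N + 1)) := by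
  refine ⟨2 * (N + 1) * 3 ^ N, by positivity, fun w hw => ⟨fun p hp => ?_, ?_⟩⟩
  · have hp : 0 < p := by linarith
    exact Schelling.exists_stable_shape hw (Schelling.isSolid_ballLp hp.le)
      (Schelling.zero_mem_ballLp hp hw) (filter_subset _ _)
      fun _ _ => Schelling.mem_nbhdLp_iff hp hw
  · exact Schelling.exists_stable_shape hw Schelling.isSolid_box Schelling.zero_mem_box
      (Schelling.box_mono (Nat.sub_le w 1)) fun _ _ => Schelling.mem_nbhdLinf_iff

/-- Upper bound for the smallest stable shape: for the Schelling model on `ℤ^N` (`N > 1`) with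
`ℓ^p`-ball neighborhoods of radius `w` (any `p ∈ [1,∞]`), there exists a nonempty connected
stable shape of diameter at most `C_N w^{N+1}`. -/
theorem stmt13 (N : ℕ) (hN : 1 < N) :
    ∃ C : ℝ, 0 < C ∧ ∀ w : ℕ, 1 ≤ w →
      (∀ p : ℝ, 1 ≤ p → ∃ A : Set (Fin N → ℤ), A.Nonempty ∧
        IsConn N A ∧ IsStableConf N (nbhdLp N p w) A ∧
        ∀ i ∈ A, ∀ j ∈ A, ∀ d : Fin N,
          ((|i d - j d| : ℤ) : ℝ) ≤ C * (w : ℝ) ^ (N + 1)) ∧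
      (∃ A : Set (Fin N → ℤ), A.Nonempty ∧
        IsConn N A ∧ IsStableConf N (nbhdLinf N w) A ∧
        ∀ i ∈ A, ∀ j ∈ A, ∀ d : Fin N,
          ((|i d - j d| : ℤ) : ℝ) ≤ C * (w : ℝ) ^ (N + 1)) :=
  stmt13_general N
end

section
/- Fix $K>0$ and let $\phi^\omega$ be the map sending $y\in\mathcal C_M(\mathcal S^N)$ to the function $x\mapsto\int_{\mathcal N(x)}\big((1-M^{-1})\mathbf 1_{p(B(x')+y(x'))=m}-M^{-1}\mathbf 1_{p(B(x')+y(x'))\ne m}\big)dx'$ in each coordinate $m$. Then for any $y,\tilde y\in\mathcal C_M(\mathcal S^N)$ with $\|\tilde y-y\|_{L^\infty}<\epsilon$, the deterministic pointwise bound holds: $\|\phi^\omega(y)-\phi^\omega(\tilde y)\|_{L^\infty}\le\sum_{m\ne m'}\int_{\mathcal S^N}\mathbf 1_{|(B_{m'}(x)-B_m(x))-(y_m(x)-y_{m'}(x))|\le 2\epsilon}\,dx$. -/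
open MeasureTheory

/-- The plurality function: `plur v = some m` iff `v m` is the unique strict maximum of `v`,
and `plur v = none` if no coordinate is a strict maximum. -/
noncomputable def plur {M : ℕ} (v : Fin M → ℝ) : Option (Fin M) :=
  if h : ∃ m, ∀ m', m' ≠ m → v m' < v m then some h.choose else none

lemma plur_eq_some_iff {M : ℕ} (v : Fin M → ℝ) (m : Fin M) :
    plur v = some m ↔ ∀ m', m' ≠ m → v m' < v m := by
  unfold plur
  constructor
  · intro h
    split at h
    · next hex =>
      obtain rfl : hex.choose = m := Option.some_inj.mp h
      exact hex.choose_spec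
    · exact absurd h (by simp)
  · intro hm
    have hex : ∃ m0, ∀ m', m' ≠ m0 → v m' < v m0 := ⟨m, hm⟩
    rw [dif_pos hex]
    congr 1
    by_contra hne
    exact absurd (hm _ hne) (not_lt.mpr (le_of_lt (hex.choose_spec m (Ne.symm hne))))

lemma plur_change {M : ℕ} (hM : 2 ≤ M) (v w : Fin M → ℝ) (ε : ℝ)
    (hd : ∀ m, |w m - v m| < ε) (hne : plur v ≠ plur w) :
    ∃ m1 m2, m1 ≠ m2 ∧ |v m2 - v m1| ≤ 2 * ε := by
  by_contra hcon
  push_neg at hcon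
  have : Nonempty (Fin M) := ⟨⟨0, by omega⟩⟩
  obtain ⟨m0, hm0⟩ := Finite.exists_max v
  have hεpos : 0 < ε := lt_of_le_of_lt (abs_nonneg _) (hd m0)
  have hmax : ∀ m', m' ≠ m0 → v m' < v m0 := by
    intro m' hne'
    rcases lt_or_eq_of_le (hm0 m') with h | h
    · exact h
    · exact absurd h (by
        intro heq
        have := hcon m' m0 hne'
        rw [heq] at this
        simp at this
        linarith)
  have hv : plur v = some m0 := (plur_eq_some_iff v m0).mpr hmax
  have hw : plur w = some m0 := by
    rw [plur_eq_some_iff]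
    intro m' hne'
    have h1 := hcon m' m0 hne'
    have h2 : v m' - v m0 < -(2*ε) := by
      have := hmax m' hne'
      have : |v m0 - v m'| = v m0 - v m' := abs_of_pos (by linarith)
      have h3 := hcon m' m0 hne'
      rw [this] at h3
      linarith
    have h4 := hd m'
    have h5 := hd m0
    have h6 : w m' - w m0 = (v m' - v m0) + ((w m' - v m') - (w m0 - v m0)) := by ring
    have := abs_lt.mp h4
    have := abs_lt.mp h5
    have : w m' - w m0 < 0 := by rw [h6]; linarith
    linarith
  exact hne (hv.trans hw.symm)

/-- Deterministic pointwise bound for the continuum Schelling drift map `φ^ω` on the torus: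
if `‖ỹ - y‖_∞ < ε` then `‖φ^ω(y) - φ^ω(ỹ)‖_∞` is bounded by the total measure of the
near-tie sets `{x : |(B_{m'}(x) - B_m(x)) - (y_m(x) - y_{m'}(x))| ≤ 2ε}` over pairs `m ≠ m'`. -/
theorem stmt15 (N M : ℕ) (hM : 2 ≤ M) (R : ℝ) [Fact (0 < R)]
    (𝒩 : Set (Fin N → AddCircle R)) (h𝒩 : MeasurableSet 𝒩)
    (B : (Fin N → AddCircle R) → Fin M → ℝ) (hB : Continuous B)
    (y ytil : (Fin N → AddCircle R) → Fin M → ℝ)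
    (hy : Continuous y) (hytil : Continuous ytil)
    (ε : ℝ) (hε : 0 < ε)
    (hclose : ∀ x m, |ytil x m - y x m| < ε) :
    ∀ m : Fin M, ∀ x : Fin N → AddCircle R,
      |(∫ x' in {z : Fin N → AddCircle R | z - x ∈ 𝒩},
          (if plur (fun m' => B x' m' + y x' m') = some m
            then 1 - (M : ℝ)⁻¹ else -(M : ℝ)⁻¹)) -
        (∫ x' in {z : Fin N → AddCircle R | z - x ∈ 𝒩},
          (if plur (fun m' => B x' m' + ytil x' m') = some m
            then 1 - (M : ℝ)⁻¹ else -(M : ℝ)⁻¹))| ≤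
      ∑ m1 : Fin M, ∑ m2 : Fin M,
        if m1 = m2 then 0 else
          (volume {x'' : Fin N → AddCircle R |
            |(B x'' m2 - B x'' m1) - (y x'' m1 - y x'' m2)| ≤ 2 * ε}).toReal := by
  intro m x
  classical
  set μ : Measure (Fin N → AddCircle R) := volume with hμ
  set S : Set (Fin N → AddCircle R) := {z | z - x ∈ 𝒩} with hSdef
  set A : Fin M → Fin M → Set (Fin N → AddCircle R) := fun m1 m2 =>
    {x'' | |(B x'' m2 - B x'' m1) - (y x'' m1 - y x'' m2)| ≤ 2 * ε} with hAdef
  have hBm : ∀ m', Continuous fun x' => B x' m' := fun m' => (continuous_apply m').comp hB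
  have hym : ∀ m', Continuous fun x' => y x' m' := fun m' => (continuous_apply m').comp hy
  have hytilm : ∀ m', Continuous fun x' => ytil x' m' := fun m' => (continuous_apply m').comp hytil
  have hA : ∀ m1 m2, MeasurableSet (A m1 m2) := by
    intro m1 m2
    apply measurableSet_le
    · exact (((((hBm m2).sub (hBm m1)).sub ((hym m1).sub (hym m2))).abs).measurable)
    · exact measurable_const
  -- measurability of the plurality sets
  have hU : ∀ (c : (Fin N → AddCircle R) → Fin M → ℝ), Continuous c →
      MeasurableSet {x' | plur (fun m' => B x' m' + c x' m') = some m} := by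
    intro c hc
    have hcm : ∀ m', Continuous fun x' => c x' m' := fun m' => (continuous_apply m').comp hc
    have : {x' | plur (fun m' => B x' m' + c x' m') = some m} =
        ⋂ m', ⋂ (_ : m' ≠ m), {x' | B x' m' + c x' m' < B x' m + c x' m} := by
      ext x'
      simp [plur_eq_some_iff]
    rw [this]
    refine MeasurableSet.iInter fun m' => MeasurableSet.iInter fun _ => ?_
    exact measurableSet_lt ((hBm m').add (hcm m')).measurable ((hBm m).add (hcm m)).measurable
  set f : (Fin N → AddCircle R) → ℝ := fun x' =>
    if plur (fun m' => B x' m' + y x' m') = some m then 1 - (M : ℝ)⁻¹ else -(M : ℝ)⁻¹ with hfdef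
  set g : (Fin N → AddCircle R) → ℝ := fun x' =>
    if plur (fun m' => B x' m' + ytil x' m') = some m then 1 - (M : ℝ)⁻¹ else -(M : ℝ)⁻¹ with hgdef
  have hMinv : (M : ℝ)⁻¹ ≤ 1 := by
    rw [inv_le_one_iff₀]
    right; exact_mod_cast Nat.one_le_of_lt hM
  have hMinv0 : (0:ℝ) ≤ (M : ℝ)⁻¹ := by positivity
  have hbound : ∀ (u : (Fin N → AddCircle R) → ℝ),
      (∀ x', u x' = 1 - (M : ℝ)⁻¹ ∨ u x' = -(M : ℝ)⁻¹) → ∀ x', ‖u x'‖ ≤ 1 := by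
    intro u hu x'
    rcases hu x' with h | h <;> rw [h, Real.norm_eq_abs, abs_le] <;> constructor <;> linarith
  have hfmeas : Measurable f := by
    exact Measurable.ite (hU y hy) measurable_const measurable_const
  have hgmeas : Measurable g := by
    exact Measurable.ite (hU ytil hytil) measurable_const measurable_const
  have hfint : Integrable f (μ.restrict S) := by
    refine Integrable.mono' (integrable_const 1) hfmeas.aestronglyMeasurable (ae_of_all _ ?_)
    exact hbound f (fun x' => by by_cases h : plur (fun m' => B x' m' + y x' m') = some m <;>
      simp [hfdef, h])
  have hgint : Integrable g (μ.restrict S) := by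
    refine Integrable.mono' (integrable_const 1) hgmeas.aestronglyMeasurable (ae_of_all _ ?_)
    exact hbound g (fun x' => by by_cases h : plur (fun m' => B x' m' + ytil x' m') = some m <;>
      simp [hgdef, h])
  set h : (Fin N → AddCircle R) → ℝ := fun x' =>
    ∑ m1 : Fin M, ∑ m2 : Fin M,
      if m1 = m2 then (0:ℝ) else (A m1 m2).indicator (fun _ => (1:ℝ)) x' with hhdef
  have hterm_int : ∀ m1 m2, Integrable
      (fun x' => if m1 = m2 then (0:ℝ) else (A m1 m2).indicator (fun _ => (1:ℝ)) x')
      (μ.restrict S) := by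
    intro m1 m2
    split_ifs
    · exact integrable_const 0
    · exact (integrable_const 1).indicator (hA m1 m2)
  have hhint : Integrable h (μ.restrict S) := by
    refine integrable_finset_sum _ fun m1 _ => integrable_finset_sum _ fun m2 _ => ?_
    exact hterm_int m1 m2
  -- pointwise bound
  have hpt : ∀ x', |f x' - g x'| ≤ h x' := by
    intro x'
    have hnonneg : ∀ m1 m2, (0:ℝ) ≤
        if m1 = m2 then (0:ℝ) else (A m1 m2).indicator (fun _ => (1:ℝ)) x' := by
      intro m1 m2
      split_ifs
      · exact le_refl 0
      · exact Set.indicator_nonneg (fun _ _ => zero_le_one) x'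
    by_cases heq : plur (fun m' => B x' m' + y x' m') = plur (fun m' => B x' m' + ytil x' m')
    · have : f x' = g x' := by simp only [hfdef, hgdef, heq]
      rw [this, sub_self, abs_zero]
      exact Finset.sum_nonneg fun m1 _ => Finset.sum_nonneg fun m2 _ => hnonneg m1 m2
    · obtain ⟨m1, m2, hm12, hnear⟩ := plur_change hM (fun m' => B x' m' + y x' m')
        (fun m' => B x' m' + ytil x' m') ε (fun m' => by simpa using hclose x' m') heq
      have hxA : x' ∈ A m1 m2 := by
        simp only [hAdef, Set.mem_setOf_eq]
        have : (B x' m2 - B x' m1) - (y x' m1 - y x' m2)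
            = (B x' m2 + y x' m2) - (B x' m1 + y x' m1) := by ring
        rw [this]
        exact hnear
      have h1 : (1:ℝ) ≤ h x' := by
        have hinner : (1:ℝ) ≤ ∑ m2' : Fin M,
            if m1 = m2' then (0:ℝ) else (A m1 m2').indicator (fun _ => (1:ℝ)) x' := by
          refine le_trans ?_ (Finset.single_le_sum (f := fun m2' =>
            if m1 = m2' then (0:ℝ) else (A m1 m2').indicator (fun _ => (1:ℝ)) x')
            (fun m2' _ => hnonneg m1 m2') (Finset.mem_univ m2))
          simp [if_neg hm12, Set.indicator_of_mem hxA]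
        refine le_trans hinner ?_
        exact Finset.single_le_sum (f := fun m1' => ∑ m2' : Fin M,
            if m1' = m2' then (0:ℝ) else (A m1' m2').indicator (fun _ => (1:ℝ)) x')
          (fun m1' _ => Finset.sum_nonneg fun m2' _ => hnonneg m1' m2') (Finset.mem_univ m1)
      have hfg : |f x' - g x'| ≤ 1 := by
        simp only [hfdef, hgdef]
        split_ifs <;> simp [abs_le] <;> (try constructor) <;> linarith
      linarith
  calc |(∫ x' in S, f x' ∂μ) - (∫ x' in S, g x' ∂μ)|
      = |∫ x' in S, (f x' - g x') ∂μ| := by rw [integral_sub hfint hgint]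
    _ ≤ ∫ x' in S, |f x' - g x'| ∂μ := by
        simpa [Real.norm_eq_abs] using
          norm_integral_le_integral_norm (μ := μ.restrict S) (fun x' => f x' - g x')
    _ ≤ ∫ x' in S, h x' ∂μ := integral_mono (hfint.sub hgint).abs hhint hpt
    _ = ∑ m1 : Fin M, ∑ m2 : Fin M, ∫ x' in S,
          (if m1 = m2 then (0:ℝ) else (A m1 m2).indicator (fun _ => (1:ℝ)) x') ∂μ := by
        rw [integral_finset_sum _ (fun m1 _ => integrable_finset_sum _ fun m2 _ => hterm_int m1 m2)]
        exact Finset.sum_congr rfl fun m1 _ => integral_finset_sum _ fun m2 _ => hterm_int m1 m2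
    _ ≤ ∑ m1 : Fin M, ∑ m2 : Fin M,
          if m1 = m2 then (0:ℝ) else (μ (A m1 m2)).toReal := by
        refine Finset.sum_le_sum fun m1 _ => Finset.sum_le_sum fun m2 _ => ?_
        split_ifs with hcase
        · simp
        · rw [integral_indicator_const (1:ℝ) (hA m1 m2)]
          simp only [smul_eq_mul, mul_one]
          refine ENNReal.toReal_mono (measure_ne_top μ _) ?_
          rw [Measure.restrict_apply (hA m1 m2)]
          exact measure_mono Set.inter_subset_left
end

section
/- For $M=2$ and $N=1$ with $\mathcal N=(-1,1)$, suppose $\hat Y^{\epsilon_1}$ and $\hat Y^{\epsilon_2}$ solve $\partial_t\hat Y(x,t)=\int_{x-1}^{x+1}\operatorname{sign}\hat Y(x',t)dx'$ on an interval with initial data satisfying $\hat Y^{\epsilon_1}(x,0)\ge\hat Y^{\epsilon_2}(x,0)+(\epsilon_1-\epsilon_2)$ for all $x$, where $\epsilon_1>\epsilon_2$. Then for each $x$, the function $t\mapsto\hat Y^{\epsilon_1}(x,t)-\hat Y^{\epsilon_2}(x,t)$ is nondecreasing in $t$; in particular $\hat Y^{\epsilon_1}(x,t)\ge\hat Y^{\epsilon_2}(x,t)+(\epsilon_1-\epsilon_2)$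 for all $t\ge 0$. -/
/-!
The difference `D = Ŷ^{ε₁} - Ŷ^{ε₂}` satisfies `∂ₜ D ≥ -4` always, and `∂ₜ D ≥ 0` at any time
at which `D ≥ 0` everywhere, because `sign` is nondecreasing. The uniform lower bound shows that an
ordering `D ≥ δ > 0` at time `τ` gives `D ≥ 0` on `[τ, τ + h]` for a step `h` depending only on
`δ`; there `D` is then nondecreasing, so `D ≥ δ` persists on `[τ, τ + h]`. Iterating in steps of
`h` covers all `t ≥ 0`.
-/

open MeasureTheory Set

namespace Real

theorem measurable_sign_s17 : Measurable Real.sign :=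
  Measurable.ite measurableSet_Iio measurable_const <|
    Measurable.ite measurableSet_Ioi measurable_const measurable_const

theorem sign_monotone : Monotone Real.sign := by
  intro a b hab
  unfold Real.sign
  split_ifs <;> linarith

theorem norm_sign_le_one (r : ℝ) : ‖Real.sign r‖ ≤ 1 := by
  rcases Real.sign_apply_eq r with h | h | h <;> simp [h]

end Real

section SignIntegral

variable {α : Type*} [MeasurableSpace α] {μ : Measure α} {s : Set α} {f g : α → ℝ}

theorem integrableOn_sign_comp (hf : Measurable f) (hs : μ s ≠ ⊤) :
    IntegrableOn (fun a => Real.sign (f a)) s μ :=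
  Measure.integrableOn_of_bounded hs (Real.measurable_sign_s17.comp hf).aestronglyMeasurable
    (M := 1) (ae_of_all _ fun a => Real.norm_sign_le_one (f a))

theorem abs_setIntegral_sign_le (hs : μ s < ⊤) : |∫ a in s, Real.sign (f a) ∂μ| ≤ μ.real s := by
  simpa using norm_setIntegral_le_of_norm_le_const hs fun a _ => Real.norm_sign_le_one (f a)

theorem setIntegral_sign_mono_on (hf : Measurable f) (hg : Measurable g) (hs : MeasurableSet s)
    (hμs : μ s ≠ ⊤) (hfg : ∀ a ∈ s, f a ≤ g a) :
    ∫ a in s, Real.sign (f a) ∂μ ≤ ∫ a in s, Real.sign (g a) ∂μ :=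
  setIntegral_mono_on (integrableOn_sign_comp hf hμs) (integrableOn_sign_comp hg hμs) hs
    fun a ha => Real.sign_monotone (hfg a ha)

end SignIntegral

theorem monotoneOn_of_hasDerivAt_nonneg {f f' : ℝ → ℝ} {s : Set ℝ} (hs : Convex ℝ s)
    (hf : ∀ t ∈ s, HasDerivAt f (f' t) t) (hf' : ∀ t ∈ s, 0 ≤ f' t) : MonotoneOn f s :=
  monotoneOn_of_hasDerivWithinAt_nonneg hs (fun t ht => (hf t ht).continuousAt.continuousWithinAt)
    (fun t ht => (hf t (interior_subset ht)).hasDerivWithinAt)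
    (fun t ht => hf' t (interior_subset ht))

section Comparison

variable {ι : Type*} {D D' : ι → ℝ → ℝ} {L δ : ℝ}

theorem le_of_mem_Icc_of_le_at (hL : 0 ≤ L) (hD : ∀ i t, 0 ≤ t → HasDerivAt (D i) (D' i t) t)
    (hlow : ∀ i t, 0 ≤ t → -L ≤ D' i t)
    (hpos : ∀ t, 0 ≤ t → (∀ i, 0 ≤ D i t) → ∀ i, 0 ≤ D' i t)
    {τ h : ℝ} (hτ : 0 ≤ τ) (hLh : L * h < δ) (hτδ : ∀ i, δ ≤ D i τ)
    (i : ι) {t : ℝ} (ht : t ∈ Icc τ (τ + h)) : δ ≤ D i t := by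
  have hIcc : Icc τ (τ + h) ⊆ Ici 0 := fun u hu => hτ.trans hu.1
  have hnonneg : ∀ u ∈ Icc τ (τ + h), ∀ j, 0 ≤ D j u := by
    intro u hu j
    have hgrowth : MonotoneOn (fun v => D j v + L * v) (Ici 0) :=
      monotoneOn_of_hasDerivAt_nonneg (convex_Ici 0)
        (fun v hv => (hD j v hv).add ((hasDerivAt_id v).const_mul L))
        (fun v hv => by have := hlow j v hv; simp only [mul_one]; linarith)
    have hdrop := hgrowth hτ (hIcc hu) hu.1
    have hLu : L * (u - τ) ≤ L * h := mul_le_mul_of_nonneg_left (by linarith [hu.2]) hL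
    linarith [hτδ j]
  have hmono : MonotoneOn (D i) (Icc τ (τ + h)) :=
    monotoneOn_of_hasDerivAt_nonneg (convex_Icc _ _) (fun u hu => hD i u (hIcc hu))
      (fun u hu => hpos u (hIcc hu) (hnonneg u hu) i)
  exact (hτδ i).trans (hmono ⟨le_rfl, ht.1.trans ht.2⟩ ht ht.1)

theorem le_of_le_initial (hδ : 0 < δ) (hL : 0 ≤ L)
    (hD : ∀ i t, 0 ≤ t → HasDerivAt (D i) (D' i t) t) (hlow : ∀ i t, 0 ≤ t → -L ≤ D' i t)
    (hpos : ∀ t, 0 ≤ t → (∀ i, 0 ≤ D i t) → ∀ i, 0 ≤ D' i t)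
    (h0 : ∀ i, δ ≤ D i 0) (i : ι) {t : ℝ} (ht : 0 ≤ t) : δ ≤ D i t := by
  obtain ⟨h, hh, hLh⟩ := exists_pos_mul_lt hδ L
  have hgrid : ∀ n : ℕ, ∀ j, δ ≤ D j (n * h) := by
    intro n
    induction n with
    | zero => simpa using h0
    | succ n ih =>
      intro j
      refine le_of_mem_Icc_of_le_at hL hD hlow hpos (by positivity) hLh ih j ⟨?_, ?_⟩ <;>
        push_cast <;> linarith
  set n := ⌊t / h⌋₊
  refine le_of_mem_Icc_of_le_at hL hD hlow hpos (by positivity) hLh (hgrid n) i ⟨?_, ?_⟩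
  · exact (le_div_iff₀ hh).1 (Nat.floor_le (div_nonneg ht hh.le))
  · have := (div_lt_iff₀ hh).1 (Nat.lt_floor_add_one (t / h))
    linarith

theorem monotoneOn_of_le_initial (hδ : 0 < δ) (hL : 0 ≤ L)
    (hD : ∀ i t, 0 ≤ t → HasDerivAt (D i) (D' i t) t) (hlow : ∀ i t, 0 ≤ t → -L ≤ D' i t)
    (hpos : ∀ t, 0 ≤ t → (∀ i, 0 ≤ D i t) → ∀ i, 0 ≤ D' i t)
    (h0 : ∀ i, δ ≤ D i 0) (i : ι) : MonotoneOn (D i) (Ici 0) :=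
  monotoneOn_of_hasDerivAt_nonneg (convex_Ici 0) (hD i) fun t ht =>
    hpos t ht (fun j => hδ.le.trans (le_of_le_initial hδ hL hD hlow hpos h0 j ht)) i

end Comparison

theorem abs_setIntegral_sign_Ioo_le (f : ℝ → ℝ) (x : ℝ) :
    |∫ x' in Ioo (x - 1) (x + 1), Real.sign (f x')| ≤ 2 := by
  calc |∫ x' in Ioo (x - 1) (x + 1), Real.sign (f x')| ≤ volume.real (Ioo (x - 1) (x + 1)) :=
        abs_setIntegral_sign_le measure_Ioo_lt_top
    _ = 2 := by rw [Real.volume_real_Ioo_of_le (by linarith)]; ring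

/-- Monotonicity (comparison principle) for the `M = 2` continuum Schelling evolution
`∂ₜ Ŷ(x,t) = ∫_{x-1}^{x+1} sign Ŷ(x',t) dx'`: if `Ŷ^{ε₁}(·,0) ≥ Ŷ^{ε₂}(·,0) + (ε₁ - ε₂)`
then `t ↦ Ŷ^{ε₁}(x,t) - Ŷ^{ε₂}(x,t)` is nondecreasing, and in particular the ordering with
gap `ε₁ - ε₂` persists for all `t ≥ 0`. -/
theorem stmt17 (ε1 ε2 : ℝ) (hε : ε2 < ε1)
    (Y1 Y2 : ℝ → ℝ → ℝ)
    (hc1 : Continuous fun p : ℝ × ℝ => Y1 p.1 p.2)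
    (hc2 : Continuous fun p : ℝ × ℝ => Y2 p.1 p.2)
    (hPDE1 : ∀ x t : ℝ, 0 ≤ t →
      HasDerivAt (fun s => Y1 x s)
        (∫ x' in Set.Ioo (x - 1) (x + 1), Real.sign (Y1 x' t)) t)
    (hPDE2 : ∀ x t : ℝ, 0 ≤ t →
      HasDerivAt (fun s => Y2 x s)
        (∫ x' in Set.Ioo (x - 1) (x + 1), Real.sign (Y2 x' t)) t)
    (hinit : ∀ x : ℝ, Y2 x 0 + (ε1 - ε2) ≤ Y1 x 0) :
    (∀ x s t : ℝ, 0 ≤ s → s ≤ t →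
      Y1 x s - Y2 x s ≤ Y1 x t - Y2 x t) ∧
    (∀ x t : ℝ, 0 ≤ t → Y2 x t + (ε1 - ε2) ≤ Y1 x t) := by
  have hδ : 0 < ε1 - ε2 := sub_pos.mpr hε
  have hslice {Y : ℝ → ℝ → ℝ} (hc : Continuous fun p : ℝ × ℝ => Y p.1 p.2) (t : ℝ) :
      Measurable fun x' => Y x' t :=
    (hc.comp (continuous_id.prodMk continuous_const)).measurable
  have hD (x t : ℝ) (ht : 0 ≤ t) := (hPDE1 x t ht).sub (hPDE2 x t ht)
  have hlow (x t : ℝ) (_ : 0 ≤ t) :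
      -4 ≤ (∫ x' in Ioo (x - 1) (x + 1), Real.sign (Y1 x' t)) -
        ∫ x' in Ioo (x - 1) (x + 1), Real.sign (Y2 x' t) := by
    have h1 := abs_le.1 (abs_setIntegral_sign_Ioo_le (Y1 · t) x)
    have h2 := abs_le.1 (abs_setIntegral_sign_Ioo_le (Y2 · t) x)
    linarith [h1.1, h2.2]
  have hpos (t : ℝ) (_ : 0 ≤ t) (hord : ∀ x, 0 ≤ Y1 x t - Y2 x t) (x : ℝ) :
      0 ≤ (∫ x' in Ioo (x - 1) (x + 1), Real.sign (Y1 x' t)) -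
        ∫ x' in Ioo (x - 1) (x + 1), Real.sign (Y2 x' t) :=
    sub_nonneg.2 <| setIntegral_sign_mono_on (hslice hc2 t) (hslice hc1 t) measurableSet_Ioo
      measure_Ioo_lt_top.ne fun x' _ => sub_nonneg.1 (hord x')
  have h0 (x : ℝ) : ε1 - ε2 ≤ Y1 x 0 - Y2 x 0 := by linarith [hinit x]
  refine ⟨fun x s t hs hst => ?_, fun x t ht => ?_⟩
  · exact monotoneOn_of_le_initial hδ zero_le_four hD hlow hpos h0 x hs (hs.trans hst) hst
  · have := le_of_le_initial (D := fun x s => Y1 x s - Y2 x s) hδ zero_le_four hD hlow hpos h0 x ht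
    linarith
end

section
/- Let $\hat Y^{\epsilon_1},\hat Y^{\epsilon_2}$ be two solutions of the $M=2$ continuum Schelling equation on a region $J$, with $\hat Y^{\epsilon_i}(x,t)=\hat B(x)+y_i(x,t)$ where each $y_i(\cdot,t)$ is Lipschitz with constant $2t$. Define $h(t)=\inf_{x\in J}(\hat Y^{\epsilon_1}(x,t)-\hat Y^{\epsilon_2}(x,t))$ and $\ell(t)=\inf\{|x-x'|:x,x'\in J,\ \hat Y^{\epsilon_1}(x,t)<0,\ \hat Y^{\epsilon_2}(x',t)>0\}$ (infimum over empty set $=\infty$). Let $c_1=\sup_{x,x'\in J}|\hat B(x)-\hat B(x')|$. Then $\ell(t)\ge\frac{h(t)-c_1}{2t}$ for all $t>0$. If moreover $\hat B$ is $1/3$-Hölder on $J$ with constant $c_2$ and $h$ is nondecreasing with $h(0)\ge\epsilon_1-\epsilon_2>0$, then with $c_0=\big(\frac{\epsilon_1-\epsilon_2}{1000c_2}\big)^3$ one also has $\ell(t)\ge\min\{c_0,\frac{h(t)}{2.01t}\}$, and hence $\ell(t)\ge\max\{\frac{h(t)-c_1}{2t},\min\{c_0,\frac{h(t)}{2.01t}\}\}$.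 -/
/-!
Since both solutions start from the same field `B̂`, their difference `y₁ - y₂` is bounded
below by `h(t)`. If `Ŷ^{ε₁}(x) < 0` and `Ŷ^{ε₂}(x') > 0`, then `Ŷ^{ε₁}(x') > h(t)`, so
`Ŷ^{ε₁} = B̂ + y₁` rises by more than `h(t)` between `x` and `x'`; that rise is at most
`|B̂(x) - B̂(x')| + 2t|x - x'|`. Bounding the oscillation of `B̂` by `c₁` gives the first estimate;
bounding it by `c₂|x - x'|^{1/3} ≤ (ε₁ - ε₂)/1000 ≤ h(t)/1000` gives the second.
-/

lemma rpow_one_div_three_lt_of_lt_pow_three {d a : ℝ} (hd : 0 ≤ d) (hda : d < a ^ 3) :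
    d ^ ((1 : ℝ) / 3) < a := by
  have ha : 0 < a := by
    by_contra! ha
    have : a ^ 3 ≤ 0 := Odd.pow_nonpos (by decide) ha
    linarith
  rw [one_div, Real.rpow_inv_lt_iff_of_pos hd ha.le (by norm_num)]
  exact_mod_cast hda

lemma gap_lt_abs_sub_add_mul_of_neg_of_pos {B y₁ y₂ : ℝ → ℝ} {L m x x' : ℝ}
    (hlip : |y₁ x - y₁ x'| ≤ L * |x - x'|) (hgap : m ≤ y₁ x' - y₂ x')
    (hneg : B x + y₁ x < 0) (hpos : 0 < B x' + y₂ x') :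
    m < |B x - B x'| + L * |x - x'| := by
  have hB := neg_abs_le (B x - B x')
  have hy := neg_le_of_abs_le hlip
  linarith

lemma min_le_of_lt_holder_add_mul {c ε m t d : ℝ} (hc : 0 < c) (ht : 0 < t) (hd : 0 ≤ d)
    (hε : ε ≤ m) (hm : m < c * d ^ ((1 : ℝ) / 3) + 2 * t * d) :
    min ((ε / (1000 * c)) ^ 3) (m / (2.01 * t)) ≤ d := by
  by_contra! hcon
  obtain ⟨hd_small, hd_lt⟩ := lt_min_iff.mp hcon
  have hroot := rpow_one_div_three_lt_of_lt_pow_three hd hd_small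
  have hε_pos : 0 < ε / (1000 * c) := (Real.rpow_nonneg hd _).trans_lt hroot
  have hholder : c * d ^ ((1 : ℝ) / 3) < ε / 1000 := by
    calc c * d ^ ((1 : ℝ) / 3) < c * (ε / (1000 * c)) := mul_lt_mul_of_pos_left hroot hc
      _ = ε / 1000 := by field_simp
  have hlip : 2 * t * d < m * (200 / 201) := by
    rw [lt_div_iff₀ (by positivity)] at hd_lt
    linarith
  have : 0 < ε := (div_pos_iff_of_pos_right (by positivity)).mp hε_pos
  linarith

theorem stmt18_general (ε1 ε2 : ℝ)
    (J : Set ℝ) (Bh : ℝ → ℝ) (y1 y2 : ℝ → ℝ → ℝ)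
    (Y1 Y2 : ℝ → ℝ → ℝ)
    (hY1 : ∀ x t : ℝ, Y1 x t = Bh x + y1 x t)
    (hY2 : ∀ x t : ℝ, Y2 x t = Bh x + y2 x t)
    (hLip1 : ∀ t : ℝ, 0 ≤ t → ∀ x ∈ J, ∀ x' ∈ J,
      |y1 x t - y1 x' t| ≤ 2 * t * |x - x'|)
    (h : ℝ → ℝ)
    (hh : ∀ t : ℝ, 0 ≤ t → ∀ x ∈ J, h t ≤ Y1 x t - Y2 x t)
    (c1 : ℝ) (hc1 : ∀ x ∈ J, ∀ x' ∈ J, |Bh x - Bh x'| ≤ c1) :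
    (∀ t : ℝ, 0 < t → ∀ x ∈ J, ∀ x' ∈ J,
      Y1 x t < 0 → 0 < Y2 x' t → (h t - c1) / (2 * t) ≤ |x - x'|) ∧
    (∀ c2 : ℝ, 0 < c2 →
      (∀ x ∈ J, ∀ x' ∈ J, |Bh x - Bh x'| ≤ c2 * |x - x'| ^ ((1 : ℝ) / 3)) →
      Monotone h → ε1 - ε2 ≤ h 0 →
      ∀ t : ℝ, 0 < t → ∀ x ∈ J, ∀ x' ∈ J,
        Y1 x t < 0 → 0 < Y2 x' t →
        min (((ε1 - ε2) / (1000 * c2)) ^ (3 : ℕ)) (h t / (2.01 * t)) ≤ |x - x'|) := by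
  have key : ∀ t, 0 < t → ∀ x ∈ J, ∀ x' ∈ J, Y1 x t < 0 → 0 < Y2 x' t →
      h t < |Bh x - Bh x'| + 2 * t * |x - x'| := by
    intro t ht x hx x' hx' hneg hpos
    have hgap := hh t ht.le x' hx'
    rw [hY1, hY2, add_sub_add_left_eq_sub] at hgap
    rw [hY1] at hneg
    rw [hY2] at hpos
    exact gap_lt_abs_sub_add_mul_of_neg_of_pos (B := Bh) (y₁ := (y1 · t)) (y₂ := (y2 · t))
      (hLip1 t ht.le x hx x' hx') hgap hneg hpos
  refine ⟨fun t ht x hx x' hx' hneg hpos => ?_,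
    fun c2 hc2 hHol hmono hh0 t ht x hx x' hx' hneg hpos => ?_⟩
  · have := key t ht x hx x' hx' hneg hpos
    have := hc1 x hx x' hx'
    rw [div_le_iff₀ (by positivity)]
    linarith
  · refine min_le_of_lt_holder_add_mul hc2 ht (abs_nonneg _) (hh0.trans (hmono ht.le)) ?_
    exact (key t ht x hx x' hx' hneg hpos).trans_le (by gcongr; exact hHol x hx x' hx')

/-- Separation estimates between the zero sets of two ordered solutions of the `M = 2`
continuum Schelling equation (Lemma 2.17 of Holden–Sheffield): with
`h(t) = inf_J (Ŷ^{ε₁} - Ŷ^{ε₂})` and `ℓ(t)` the minimal distance between a point of `J` where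
`Ŷ^{ε₁} < 0` and one where `Ŷ^{ε₂} > 0`, one has `ℓ(t) ≥ (h(t) - c₁)/(2t)`, and, under a
`1/3`-Hölder assumption on `B̂`, also `ℓ(t) ≥ min{c₀, h(t)/(2.01 t)}` with
`c₀ = ((ε₁-ε₂)/(1000 c₂))³`. -/
theorem stmt18 (ε1 ε2 : ℝ) (hε : ε2 < ε1)
    (J : Set ℝ) (Bh : ℝ → ℝ) (y1 y2 : ℝ → ℝ → ℝ)
    (Y1 Y2 : ℝ → ℝ → ℝ)
    (hY1 : ∀ x t : ℝ, Y1 x t = Bh x + y1 x t)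
    (hY2 : ∀ x t : ℝ, Y2 x t = Bh x + y2 x t)
    (hLip1 : ∀ t : ℝ, 0 ≤ t → ∀ x ∈ J, ∀ x' ∈ J,
      |y1 x t - y1 x' t| ≤ 2 * t * |x - x'|)
    (hLip2 : ∀ t : ℝ, 0 ≤ t → ∀ x ∈ J, ∀ x' ∈ J,
      |y2 x t - y2 x' t| ≤ 2 * t * |x - x'|)
    (h : ℝ → ℝ)
    (hh : ∀ t : ℝ, 0 ≤ t → ∀ x ∈ J, h t ≤ Y1 x t - Y2 x t)
    (c1 : ℝ) (hc1 : ∀ x ∈ J, ∀ x' ∈ J, |Bh x - Bh x'| ≤ c1) :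
    (∀ t : ℝ, 0 < t → ∀ x ∈ J, ∀ x' ∈ J,
      Y1 x t < 0 → 0 < Y2 x' t → (h t - c1) / (2 * t) ≤ |x - x'|) ∧
    (∀ c2 : ℝ, 0 < c2 →
      (∀ x ∈ J, ∀ x' ∈ J, |Bh x - Bh x'| ≤ c2 * |x - x'| ^ ((1 : ℝ) / 3)) →
      Monotone h → ε1 - ε2 ≤ h 0 →
      ∀ t : ℝ, 0 < t → ∀ x ∈ J, ∀ x' ∈ J,
        Y1 x t < 0 → 0 < Y2 x' t →
        min (((ε1 - ε2) / (1000 * c2)) ^ (3 : ℕ)) (h t / (2.01 * t)) ≤ |x - x'|) :=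
  stmt18_general ε1 ε2 J Bh y1 y2 Y1 Y2 hY1 hY2 hLip1 h hh c1 hc1
end
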